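/- arXiv:2409.13914 — 6 statements merged into one kernel-verified Lean document; each statement's English description precedes it below -/
import Mathlib

section
/- Let $L\subsetneq\{1,\dots,n\}$ be a nonempty subset with complement $L^c$, let $e^2_p(L)$ denote the $p$-th elementary symmetric polynomial in the variables $y_i^2$ for $i\in L$, and let $h^2_p(L^c)$ denote the $p$-th complete homogeneous symmetric polynomial in the variables $y_i^2$ for $i\in L^c$. Let $I_n\subseteq\mathbb{C}[y_1,\dots,y_n]$ be the ideal generated by the symmetric polynomials without constant term in $y_1^2,\dots,y_n^2$. Then for every $1\leq p\leq |L|$, the difference $e^2_p(L)-(-1)^p h^2_p(L^c)$ belongs to $I_n$. -/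
/-!
Put `E_A(t) = ∏_{i ∈ A} (1 + z_i t)` and `H_A(t) = ∏_{i ∈ A} (1 - z_i t)⁻¹`, whose coefficients
are `e_p(A)` and `h_p(A)`. Then `H_A(t) E_A(-t) = 1` and `E_univ = E_L E_Lᶜ`, so
`E_L(t) = E_univ(t) H_Lᶜ(-t)`. Comparing coefficients of `t^p`, the difference
`e_p(L) - (-1)^p h_p(Lᶜ)` is a combination of the `e_k(univ)` with `k ≥ 1`, which lie in the
ideal (for `k > n` they vanish).
-/

section GeneratingSeries

open Finset PowerSeries

variable {ι R : Type*} [CommRing R]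

def esymmSeries (z : ι → R) (A : Finset ι) : R⟦X⟧ :=
  mk fun p => ∑ S ∈ A.powersetCard p, ∏ i ∈ S, z i

def hsymmSeries [DecidableEq ι] (z : ι → R) (A : Finset ι) : R⟦X⟧ :=
  mk fun p => ∑ m ∈ A.sym p, ((m : Multiset ι).map z).prod

theorem esymmSeries_eq_prod (z : ι → R) (A : Finset ι) :
    esymmSeries z A = ∏ i ∈ A, (1 + C (z i) * X) := by
  ext p
  simp_rw [esymmSeries, coeff_mk, prod_one_add, map_sum, prod_mul_distrib, prod_const,
    ← map_prod, coeff_C_mul_X_pow, sum_ite, sum_const_zero, add_zero, powersetCard_eq_filter,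
    eq_comm (a := p)]

theorem mk_pow_mul_one_sub_C_mul_X (c : R) : mk (c ^ ·) * (1 - C c * X) = 1 := by
  have hgeom : mk (c ^ ·) = rescale c (mk 1) := by
    simp [rescale_mk]
  rw [hgeom, ← rescale_X, ← map_one (rescale c), ← map_sub, ← map_mul,
    mk_one_mul_one_sub_eq_one, map_one]

variable [DecidableEq ι]

theorem hsymmSeries_empty (z : ι → R) : hsymmSeries z ∅ = 1 := by
  ext (_ | n) <;> simp [hsymmSeries, coeff_one, Sym.eq_nil_of_card_zero]

theorem hsymmSeries_insert (z : ι → R) {a : ι} {A : Finset ι} (ha : a ∉ A) :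
    hsymmSeries z (insert a A) = mk (z a ^ ·) * hsymmSeries z A := by
  ext n
  have hfill (i : Fin (n + 1)) (m : Sym ι (n - i)) :
      (((m.fill a i : Sym ι n) : Multiset ι).map z).prod =
        z a ^ (i : ℕ) * ((m : Multiset ι).map z).prod := by
    simp [Sym.coe_fill, Sym.coe_replicate, mul_comm]
  -- `symInsertEquiv` splits a multiset on `insert a A` into `i` copies of `a` and one on `A`.
  rw [hsymmSeries, coeff_mk, ← sum_coe_sort, ← (symInsertEquiv ha).symm.sum_comp,
    Fintype.sum_sigma, coeff_mul,
    Nat.sum_antidiagonal_eq_sum_range_succ (fun i j => coeff i _ * coeff j _),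
    ← Fin.sum_univ_eq_sum_range]
  refine Fintype.sum_congr _ _ fun i => ?_
  simp only [symInsertEquiv_symm_apply_coe, hfill, hsymmSeries, coeff_mk, mul_sum]
  exact sum_coe_sort (A.sym (n - i)) fun m => z a ^ (i : ℕ) * ((m : Multiset ι).map z).prod

theorem hsymmSeries_mul_rescale_esymmSeries (z : ι → R) (A : Finset ι) :
    hsymmSeries z A * rescale (-1) (esymmSeries z A) = 1 := by
  induction A using Finset.induction_on with
  | empty => simp [hsymmSeries_empty, esymmSeries_eq_prod]
  | insert a A ha ih =>
    have hfactor : rescale (-1 : R) (1 + C (z a) * X) = 1 - C (z a) * X := by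
      ext (_ | _ | n) <;> simp [coeff_rescale, coeff_one]
    rw [hsymmSeries_insert z ha, esymmSeries_eq_prod, prod_insert ha, ← esymmSeries_eq_prod,
      map_mul, hfactor]
    calc _ = mk (z a ^ ·) * (1 - C (z a) * X) *
          (hsymmSeries z A * rescale (-1) (esymmSeries z A)) := by ring
      _ = 1 := by rw [mk_pow_mul_one_sub_C_mul_X, ih, one_mul]

theorem esymmSeries_eq_mul_rescale_hsymmSeries_compl [Fintype ι] (z : ι → R) (L : Finset ι) :
    esymmSeries z L = esymmSeries z univ * rescale (-1) (hsymmSeries z Lᶜ) := by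
  have hinv : rescale (-1 : R) (hsymmSeries z Lᶜ) * esymmSeries z Lᶜ = 1 := by
    simpa [rescale_rescale, rescale_one] using
      congrArg (rescale (-1 : R)) (hsymmSeries_mul_rescale_esymmSeries z Lᶜ)
  have hunion : esymmSeries z univ = esymmSeries z L * esymmSeries z Lᶜ := by
    simp only [esymmSeries_eq_prod, prod_mul_prod_compl]
  calc esymmSeries z L
      = esymmSeries z L * (rescale (-1 : R) (hsymmSeries z Lᶜ) * esymmSeries z Lᶜ) := by
        rw [hinv, mul_one]
    _ = _ := by rw [hunion]; ring

theorem coeff_mul_mem_of_forall_coeff_mem {I : Ideal R} {f : R⟦X⟧}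
    (hf : ∀ n, coeff n f ∈ I) (g : R⟦X⟧) (n : ℕ) : coeff n (f * g) ∈ I := by
  rw [coeff_mul]
  exact I.sum_mem fun x _ => I.mul_mem_right _ (hf x.1)

theorem esymm_sub_neg_one_pow_mul_hsymm_compl_mem [Fintype ι] (z : ι → R) (L : Finset ι)
    {I : Ideal R} (hI : ∀ k, 1 ≤ k → ∑ S ∈ univ.powersetCard k, ∏ i ∈ S, z i ∈ I) (p : ℕ) :
    ∑ S ∈ L.powersetCard p, ∏ i ∈ S, z i -
      (-1) ^ p * ∑ m ∈ Lᶜ.sym p, ((m : Multiset ι).map z).prod ∈ I := by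
  have hdiff : esymmSeries z L - rescale (-1) (hsymmSeries z Lᶜ) =
      (esymmSeries z univ - 1) * rescale (-1) (hsymmSeries z Lᶜ) := by
    rw [esymmSeries_eq_mul_rescale_hsymmSeries_compl z L]; ring
  have hcoeff : ∀ k, coeff k (esymmSeries z univ - 1) ∈ I := by
    rintro (_ | k)
    · simp [esymmSeries]
    · simpa [esymmSeries, coeff_one] using hI (k + 1) k.succ_pos
  have hmem := coeff_mul_mem_of_forall_coeff_mem hcoeff (rescale (-1) (hsymmSeries z Lᶜ)) p
  rw [← hdiff] at hmem
  simpa [esymmSeries, hsymmSeries, coeff_rescale] using hmem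

end GeneratingSeries

open MvPolynomial

theorem stmt2_general (n : ℕ) (L : Finset (Fin n))
    (In : Ideal (MvPolynomial (Fin n) ℂ))
    (hIn : In = Ideal.span { q | ∃ p : ℕ, 1 ≤ p ∧ p ≤ n ∧
        q = ∑ S ∈ Finset.powersetCard p (Finset.univ : Finset (Fin n)),
              ∏ i ∈ S, X i ^ 2 })
    (p : ℕ) :
    (∑ S ∈ Finset.powersetCard p L, ∏ i ∈ S, X i ^ 2)
      - (-1 : MvPolynomial (Fin n) ℂ) ^ p *
          (∑ m ∈ (Lᶜ).sym p,
            ((m : Multiset (Fin n)).map (fun i => (X i : MvPolynomial (Fin n) ℂ) ^ 2)).prod)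
      ∈ In := by
  refine esymm_sub_neg_one_pow_mul_hsymm_compl_mem (fun i => X i ^ 2) L (fun k hk => ?_) p
  rcases le_or_gt k n with hkn | hnk
  · exact hIn ▸ Ideal.subset_span ⟨k, hk, hkn, rfl⟩
  · rw [Finset.powersetCard_eq_empty.mpr (by simpa using hnk), Finset.sum_empty]
    exact In.zero_mem

/-- for a nonempty proper subset `L ⊆ {1,…,n}` and `1 ≤ p ≤ |L|`, the difference
`e²_p(L) - (-1)^p h²_p(Lᶜ)` lies in the ideal generated by the symmetric polynomials
(without constant term) in `y₁²,…,y_n²`. -/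
theorem stmt2 (n : ℕ) (L : Finset (Fin n)) (hL : L.Nonempty) (hLne : L ≠ Finset.univ)
    (In : Ideal (MvPolynomial (Fin n) ℂ))
    (hIn : In = Ideal.span { q | ∃ p : ℕ, 1 ≤ p ∧ p ≤ n ∧
        q = ∑ S ∈ Finset.powersetCard p (Finset.univ : Finset (Fin n)),
              ∏ i ∈ S, X i ^ 2 })
    (p : ℕ) (hp1 : 1 ≤ p) (hp2 : p ≤ L.card) :
    (∑ S ∈ Finset.powersetCard p L, ∏ i ∈ S, X i ^ 2)
      - (-1 : MvPolynomial (Fin n) ℂ) ^ p *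
          (∑ m ∈ (Lᶜ).sym p,
            ((m : Multiset (Fin n)).map (fun i => (X i : MvPolynomial (Fin n) ℂ) ^ 2)).prod)
      ∈ In :=
  stmt2_general n L In hIn p
end

section
/- Let $k\geq 1$ and consider the polynomial ring $\mathbb{C}[y_1,\dots,y_{2k}]$. Let $I_{(2k,2k)}$ be the ideal generated by: (i) $y_i^2$ for $1\leq i\leq 2k$, and (ii) $y_L - y_{\bar L}$ for every subset $L\subseteq\{1,\dots,2k\}$ with $|L|=k$ and complement $\bar L$, where $y_L=\prod_{i\in L}y_i$. Then $\dim_\mathbb{C}\mathbb{C}[y_1,\dots,y_{2k}]/I_{(2k,2k)} = 2^{2k-1}$, and indeed equals $\sum_{l=0}^{k-1}\binom{2k}{l}+\frac{1}{2}\binom{2k}{k}$. -/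
/-!
The squares `y_i²` kill every monomial that is not squarefree, and the relations `y_L = y_{L̄}`
kill every squarefree `y_S` with `|S| > k`: writing `y_S = y_L y_{S∖L}` with `L ⊆ S`, `|L| = k`,
it is congruent to `y_{L̄} y_{S∖L}`, which is divisible by a square. So the quotient is spanned by
the `y_S` with `|S| < k` together with, for each complementary pair of `k`-sets, the one containing
a fixed index `e₀`. These are linearly independent: for `|T| ≤ k` the functional "coefficient of
`y_T`, plus that of `y_{T̄}` when `|T| = k`" vanishes on the ideal, and these functionals are dual
to the spanning family. Complementation exchanges the index sets of this family with all other
subsets, so there are `2^{2k-1}` of them; counting them by size gives the binomial sum.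
-/

open MvPolynomial Finset

noncomputable section

theorem Nat.two_mul_sum_range_choose_add_choose_middle (k : ℕ) :
    2 * ∑ l ∈ range k, (2 * k).choose l + (2 * k).choose k = 2 ^ (2 * k) := by
  have hreflect : ∑ l ∈ Ico (k + 1) (2 * k + 1), (2 * k).choose l
      = ∑ l ∈ range k, (2 * k).choose l := by
    have := sum_Ico_reflect (fun l => (2 * k).choose l) 0 (m := k) (n := 2 * k) (by omega)
    rw [show 2 * k + 1 - k = k + 1 by omega, Nat.sub_zero] at this
    rw [← this, range_eq_Ico]
    exact sum_congr rfl fun l hl => choose_symm (by simp at hl; omega)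
  rw [← sum_range_choose, ← sum_range_add_sum_Ico _ (by omega : k ≤ 2 * k + 1),
    sum_eq_sum_Ico_succ_bot (by omega), hreflect]
  ring

namespace MvPolynomial

section SquarefreeMonomials

variable {σ R : Type*}

def sqfreeExp (S : Finset σ) : σ →₀ ℕ := ∑ i ∈ S, Finsupp.single i 1

theorem prod_X_eq_monomial_sqfreeExp [CommSemiring R] (S : Finset σ) :
    ∏ i ∈ S, (X i : MvPolynomial σ R) = monomial (sqfreeExp S) 1 :=
  (monomial_sum_one S _).symm

theorem sqfreeExp_apply [DecidableEq σ] (S : Finset σ) (j : σ) :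
    sqfreeExp S j = if j ∈ S then 1 else 0 := by
  simp [sqfreeExp, Finsupp.finsetSum_apply, Finsupp.single_apply]

theorem sqfreeExp_le_sqfreeExp_iff {S T : Finset σ} : sqfreeExp S ≤ sqfreeExp T ↔ S ⊆ T := by
  classical
  refine ⟨fun h j hj => ?_, fun h j => ?_⟩
  · have := h j
    simp only [sqfreeExp_apply, if_pos hj] at this
    by_contra hjT
    simp [hjT] at this
  · simp only [sqfreeExp_apply]
    split_ifs with hS hT <;> simp_all [@h j]

theorem sqfreeExp_injective : Function.Injective (sqfreeExp (σ := σ)) := fun _ _ h =>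
  (sqfreeExp_le_sqfreeExp_iff.1 h.le).antisymm (sqfreeExp_le_sqfreeExp_iff.1 h.ge)

theorem eq_sqfreeExp_support {m : σ →₀ ℕ} (h : ∀ i, m i ≤ 1) : m = sqfreeExp m.support := by
  classical
  ext j
  have := h j
  simp only [sqfreeExp_apply, Finsupp.mem_support_iff]
  split_ifs <;> omega

variable [CommSemiring R]

theorem coeff_sqfreeExp_mul_X_sq (T : Finset σ) (r : MvPolynomial σ R) (i : σ) :
    coeff (sqfreeExp T) (r * X i ^ 2) = 0 := by
  classical
  rw [X_pow_eq_monomial, coeff_mul_monomial', if_neg]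
  intro h
  have := h i
  rw [Finsupp.single_eq_same, sqfreeExp_apply] at this
  split_ifs at this <;> omega

theorem coeff_sqfreeExp_mul_prod_X [DecidableEq σ] {T L : Finset σ} (h : #T ≤ #L)
    (r : MvPolynomial σ R) :
    coeff (sqfreeExp T) (r * ∏ i ∈ L, X i) = if T = L then coeff 0 r else 0 := by
  simp only [prod_X_eq_monomial_sqfreeExp, coeff_mul_monomial', sqfreeExp_le_sqfreeExp_iff]
  by_cases hLT : L ⊆ T
  · obtain rfl := eq_of_subset_of_card_le hLT h
    simp
  · rw [if_neg hLT, if_neg]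
    rintro rfl
    exact hLT subset_rfl

end SquarefreeMonomials

section ComplementIdeal

variable {σ : Type*} [Fintype σ] [DecidableEq σ] (K : Type*) [CommRing K] (k : ℕ)

def complementIdeal : Ideal (MvPolynomial σ K) :=
  Ideal.span ({ q | ∃ i : σ, q = X i ^ 2 } ∪
    { q | ∃ L : Finset σ, L.card = k ∧ q = (∏ i ∈ L, X i) - ∏ i ∈ Lᶜ, X i })

def pairedCoeff (T : Finset σ) : MvPolynomial σ K →ₗ[K] K :=
  if #T = k then lcoeff K (sqfreeExp T) + lcoeff K (sqfreeExp Tᶜ) else lcoeff K (sqfreeExp T)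

variable {K k}

theorem pairedCoeff_mul_X_sq (T : Finset σ) (r : MvPolynomial σ K) (i : σ) :
    pairedCoeff K k T (r * X i ^ 2) = 0 := by
  unfold pairedCoeff
  split_ifs <;> simp [coeff_sqfreeExp_mul_X_sq]

theorem pairedCoeff_mul_prod_X_eq_compl (hσ : Fintype.card σ = 2 * k) {T L : Finset σ}
    (hT : #T ≤ k) (hL : #L = k) (r : MvPolynomial σ K) :
    pairedCoeff K k T (r * ∏ i ∈ L, X i) = pairedCoeff K k T (r * ∏ i ∈ Lᶜ, X i) := by
  have hLc : #Lᶜ = k := by rw [card_compl]; omega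
  unfold pairedCoeff
  split_ifs with hTk
  · have hTc : #Tᶜ = k := by rw [card_compl]; omega
    simp only [LinearMap.add_apply, lcoeff_apply]
    rw [coeff_sqfreeExp_mul_prod_X (by omega), coeff_sqfreeExp_mul_prod_X (by omega),
      coeff_sqfreeExp_mul_prod_X (by omega), coeff_sqfreeExp_mul_prod_X (by omega)]
    simp only [compl_inj_iff, eq_compl_comm (x := T), eq_comm (a := L)]
    exact add_comm _ _
  · have hTL : T ≠ L := fun h => hTk (h ▸ hL)
    have hTLc : T ≠ Lᶜ := fun h => hTk (h ▸ hLc)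
    simp only [lcoeff_apply]
    rw [coeff_sqfreeExp_mul_prod_X (by omega), coeff_sqfreeExp_mul_prod_X (by omega),
      if_neg hTL, if_neg hTLc]

theorem pairedCoeff_eq_zero_of_mem (hσ : Fintype.card σ = 2 * k) {T : Finset σ} (hT : #T ≤ k)
    {p : MvPolynomial σ K} (hp : p ∈ complementIdeal K k) : pairedCoeff K k T p = 0 := by
  suffices ∀ r, pairedCoeff K k T (r * p) = 0 by simpa using this 1
  induction hp using Submodule.span_induction with
  | mem g hg =>
    rintro r
    rcases hg with ⟨i, rfl⟩ | ⟨L, hL, rfl⟩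
    · exact pairedCoeff_mul_X_sq T r i
    · rw [mul_sub, map_sub, pairedCoeff_mul_prod_X_eq_compl hσ hT hL, sub_self]
  | zero => simp
  | add p q _ _ hp hq => simp [mul_add, hp, hq]
  | smul a p _ hp => simpa [mul_assoc] using fun r => hp (r * a)

variable (k) in
def standardSets (e₀ : σ) : Finset (Finset σ) := {S | #S < k ∨ (#S = k ∧ e₀ ∈ S)}

theorem mem_standardSets {e₀ : σ} {S : Finset σ} :
    S ∈ standardSets k e₀ ↔ #S < k ∨ (#S = k ∧ e₀ ∈ S) := by
  simp [standardSets]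

theorem compl_mem_standardSets_iff (hσ : Fintype.card σ = 2 * k) {e₀ : σ} {S : Finset σ} :
    Sᶜ ∈ standardSets k e₀ ↔ S ∉ standardSets k e₀ := by
  have hc : #Sᶜ = 2 * k - #S := by rw [card_compl, hσ]
  have hS : #S ≤ 2 * k := hσ ▸ card_le_univ S
  simp only [mem_standardSets, mem_compl, hc]
  by_cases he : e₀ ∈ S <;> simp only [he, not_true, not_false_iff, and_true, and_false,
    or_false] <;> omega

theorem two_mul_card_standardSets (hσ : Fintype.card σ = 2 * k) (e₀ : σ) :
    2 * #(standardSets k e₀) = 2 ^ (2 * k) := by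
  have hcompl : #(standardSets k e₀)ᶜ = #(standardSets k e₀) :=
    card_nbij' compl compl (fun S hS => by simpa [compl_mem_standardSets_iff hσ] using hS)
      (fun S hS => by simpa [compl_mem_standardSets_iff hσ] using hS)
      (fun S _ => compl_compl S) (fun S _ => compl_compl S)
  have htotal := card_compl_add_card (standardSets k e₀)
  rw [Fintype.card_finset, hσ] at htotal
  omega

theorem pairedCoeff_prod_X (hσ : Fintype.card σ = 2 * k) {e₀ : σ} {S T : Finset σ}
    (hS : S ∈ standardSets k e₀) (hT : T ∈ standardSets k e₀) :
    pairedCoeff K k T (∏ i ∈ S, X i) = if T = S then 1 else 0 := by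
  have hcoeff (U : Finset σ) :
      coeff (sqfreeExp U) (∏ i ∈ S, X i : MvPolynomial σ K) = if U = S then 1 else 0 := by
    rw [prod_X_eq_monomial_sqfreeExp, coeff_monomial]
    simp only [sqfreeExp_injective.eq_iff, eq_comm (a := S)]
  have hTS : Tᶜ ≠ S := by
    rintro rfl
    exact (compl_mem_standardSets_iff hσ).1 hS hT
  by_cases hTk : #T = k <;> simp [pairedCoeff, hTk, hcoeff, hTS]

theorem linearIndependent_mkₐ_prod_X (hσ : Fintype.card σ = 2 * k) (e₀ : σ) :
    LinearIndependent K fun S : standardSets k e₀ =>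
      Ideal.Quotient.mkₐ K (complementIdeal K k) (∏ i ∈ S.1, X i) := by
  rw [Fintype.linearIndependent_iff]
  intro g hg T
  have hmem : ∑ S : standardSets k e₀, g S • ∏ i ∈ S.1, X i ∈ complementIdeal K k := by
    rw [← Ideal.Quotient.eq_zero_iff_mem, ← Ideal.Quotient.mkₐ_eq_mk K, map_sum]
    simpa only [map_smul] using hg
  have hT : #T.1 ≤ k := by rcases mem_standardSets.1 T.2 with h | h <;> omega
  have := pairedCoeff_eq_zero_of_mem hσ hT hmem
  simp only [map_sum, map_smul, smul_eq_mul] at this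
  rwa [sum_eq_single T (fun S _ hST => by
      rw [pairedCoeff_prod_X hσ S.2 T.2, if_neg fun h => hST (Subtype.ext h.symm), mul_zero])
    (by simp), pairedCoeff_prod_X hσ T.2 T.2, if_pos rfl, mul_one] at this

theorem mkₐ_prod_X_compl {S : Finset σ} (hS : #S = k) :
    Ideal.Quotient.mkₐ K (complementIdeal K k) (∏ i ∈ S, X i) =
      Ideal.Quotient.mkₐ K (complementIdeal K k) (∏ i ∈ Sᶜ, X i) :=
  Ideal.Quotient.eq.2 (Ideal.subset_span (Or.inr ⟨S, hS, rfl⟩))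

theorem prod_X_mem_complementIdeal {S : Finset σ} (hS : k < #S) :
    ∏ i ∈ S, X i ∈ complementIdeal K k := by
  obtain ⟨L, hLS, hL⟩ := exists_subset_card_eq hS.le
  obtain ⟨i, hi⟩ : (S \ L : Finset σ).Nonempty := by
    rw [← card_pos, card_sdiff_of_subset hLS]
    omega
  have hiL : i ∈ Lᶜ := mem_compl.2 (mem_sdiff.1 hi).2
  have hsq : (∏ j ∈ Lᶜ, X j) * ∏ j ∈ S \ L, X j ∈ complementIdeal K k := by
    refine Ideal.mem_of_dvd _ ?_ (Ideal.subset_span (Or.inl ⟨i, rfl⟩))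
    rw [pow_two]
    exact mul_dvd_mul (dvd_prod_of_mem _ hiL) (dvd_prod_of_mem _ hi)
  rw [← prod_sdiff hLS, mul_comm, ← sub_add_cancel (∏ j ∈ L, X j) (∏ j ∈ Lᶜ, X j), add_mul]
  exact add_mem (Ideal.mul_mem_right _ _ (Ideal.subset_span (Or.inr ⟨L, hL, rfl⟩))) hsq

theorem monomial_mem_complementIdeal {m : σ →₀ ℕ} {i : σ} (hi : 2 ≤ m i) (c : K) :
    monomial m c ∈ complementIdeal K k := by
  refine Ideal.mem_of_dvd _ ?_ (Ideal.subset_span (Or.inl ⟨i, rfl⟩))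
  rw [X_pow_eq_monomial, monomial_dvd_monomial]
  exact ⟨Or.inr (Finsupp.single_le_iff.2 hi), one_dvd c⟩

theorem span_mkₐ_prod_X_eq_top (hσ : Fintype.card σ = 2 * k) (e₀ : σ) :
    Submodule.span K (Set.range fun S : standardSets k e₀ =>
      Ideal.Quotient.mkₐ K (complementIdeal K k) (∏ i ∈ S.1, X i)) = ⊤ := by
  set π := Ideal.Quotient.mkₐ K (complementIdeal (σ := σ) K k)
  set W := Submodule.span K (Set.range fun S : standardSets k e₀ => π (∏ i ∈ S.1, X i))
  have hprod (S : Finset σ) : π (∏ i ∈ S, X i) ∈ W := by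
    rcases lt_trichotomy #S k with h | h | h
    · exact Submodule.subset_span ⟨⟨S, mem_standardSets.2 (Or.inl h)⟩, rfl⟩
    · by_cases he : e₀ ∈ S
      · exact Submodule.subset_span ⟨⟨S, mem_standardSets.2 (Or.inr ⟨h, he⟩)⟩, rfl⟩
      · have hSc : Sᶜ ∈ standardSets k e₀ := (compl_mem_standardSets_iff hσ).2 fun hS => by
          rcases mem_standardSets.1 hS with h' | h' <;> simp_all
        rw [mkₐ_prod_X_compl h]
        exact Submodule.subset_span ⟨⟨Sᶜ, hSc⟩, rfl⟩
    · rw [Ideal.Quotient.mkₐ_eq_mk, Ideal.Quotient.eq_zero_iff_mem.2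
        (prod_X_mem_complementIdeal h)]
      exact W.zero_mem
  have hmonomial (m : σ →₀ ℕ) : π (monomial m 1) ∈ W := by
    by_cases h : ∃ i, 2 ≤ m i
    · obtain ⟨i, hi⟩ := h
      rw [Ideal.Quotient.mkₐ_eq_mk, Ideal.Quotient.eq_zero_iff_mem.2
        (monomial_mem_complementIdeal hi 1)]
      exact W.zero_mem
    · simp only [not_exists, not_le] at h
      rw [eq_sqfreeExp_support fun i => Nat.le_of_lt_succ (h i), ← prod_X_eq_monomial_sqfreeExp]
      exact hprod _
  have hsurj : LinearMap.range π.toLinearMap = ⊤ :=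
    LinearMap.range_eq_top.2 (Ideal.Quotient.mkₐ_surjective K _)
  rw [eq_top_iff, ← hsurj, LinearMap.range_eq_map, ← (basisMonomials σ K).span_eq,
    Submodule.map_span_le]
  rintro _ ⟨m, rfl⟩
  simpa using hmonomial m

theorem two_mul_finrank_quotient_complementIdeal [Nontrivial K] [Nonempty σ]
    (hσ : Fintype.card σ = 2 * k) :
    2 * Module.finrank K (MvPolynomial σ K ⧸ complementIdeal K k) = 2 ^ (2 * k) := by
  obtain ⟨e₀⟩ := ‹Nonempty σ›
  rw [Module.finrank_eq_card_basis (Module.Basis.mk (linearIndependent_mkₐ_prod_X hσ e₀)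
    (span_mkₐ_prod_X_eq_top hσ e₀).ge), Fintype.card_coe, two_mul_card_standardSets hσ]

end ComplementIdeal

end MvPolynomial

/-- the quotient of `ℂ[y₁,…,y_{2k}]` by the ideal `I_{(2k,2k)}` generated by
`y_i²` and `y_L - y_{L̄}` for `|L| = k` has dimension `2^{2k-1} = ∑_{l<k} C(2k,l) + C(2k,k)/2`. -/
theorem stmt13 (k : ℕ) (hk : 1 ≤ k)
    (I : Ideal (MvPolynomial (Fin (2 * k)) ℂ))
    (hI : I = Ideal.span ({ q | ∃ i : Fin (2 * k), q = X i ^ 2 } ∪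
      { q | ∃ L : Finset (Fin (2 * k)), L.card = k ∧
          q = (∏ i ∈ L, X i) - ∏ i ∈ Lᶜ, X i })) :
    Module.finrank ℂ (MvPolynomial (Fin (2 * k)) ℂ ⧸ I) = 2 ^ (2 * k - 1) ∧
      2 * Module.finrank ℂ (MvPolynomial (Fin (2 * k)) ℂ ⧸ I)
        = 2 * (∑ l ∈ Finset.range k, (2 * k).choose l) + (2 * k).choose k := by
  change I = complementIdeal ℂ k at hI
  subst hI
  have : Nonempty (Fin (2 * k)) := ⟨⟨0, by omega⟩⟩
  have hdim := two_mul_finrank_quotient_complementIdeal (K := ℂ) (Fintype.card_fin (2 * k))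
  have hpow : 2 ^ (2 * k) = 2 * 2 ^ (2 * k - 1) := by
    rw [← pow_succ', Nat.sub_add_cancel (by omega)]
  refine ⟨by omega, ?_⟩
  rw [hdim, Nat.two_mul_sum_range_choose_add_choose_middle]
end
end

section
/- Consider the surjective ring homomorphism $p:\mathbb{C}[y_1,\dots,y_{2k}]/(y_i^2,\ y_K:|K|=k+1)\twoheadrightarrow\mathbb{C}[y_1,\dots,y_{2k}]/I_{(2k,2k)}$, where $I_{(2k,2k)}$ is generated by $y_i^2$ and $y_L-y_{\bar L}$ for $|L|=k$ (with $\bar L$ the complement of $L$), and $(y_K:|K|=k+1)$ denotes the squarefree monomials of degree $k+1$. Then the kernel of $p$ is the linear span of the elements $y_L-y_{\bar L}$ for $|L|=k$, which has dimension $\frac{1}{2}\binom{2k}{k}$, and is an irreducible representation of the Weyl group $W_D^{2k}$ of type $D_{2k}$ acting by signed permutations with an even number of sign changes. -/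
/-!
Write `I` for the ideal `(y_i², y_K : |K| = k + 1)`. When `|L| = k`, every variable kills
`y_L - y_{L̄}` modulo `I`, so the ideal these elements generate in `ℂ[y]/I` is just their
`ℂ`-span, which is therefore the kernel of `p`. Fixing an index `a`, the classes of `y_L - y_{L̄}`
with `a ∈ L` form a basis of this span: `y_{L̄} - y_L` is the negative of `y_L - y_{L̄}`, and the
coefficient of the squarefree monomial `y_L` (of degree `k`) vanishes on `I`.

These basis vectors are common eigenvectors of the sign changes. Two of them, for `L₀ ≠ L₁`,
are told apart by changing the signs of `y_i` and `y_j` with `i ∈ L₀ \ L₁` and `j ∉ L₀ ∪ L₁`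
(such `j` exists because `a ∈ L₀ ∩ L₁`). The projections `(1 - g)/2` attached to these sign
changes cut any nonzero invariant subspace down to a single basis vector, and permutations carry
that vector to all others.
-/

open MvPolynomial

noncomputable section

/-- The algebra endomorphism of `ℂ[y₁,…,y_n]` given by the signed permutation
`y_i ↦ ε_i · y_{σ(i)}`. -/
def signedMap {n : ℕ} (σ : Equiv.Perm (Fin n)) (ε : Fin n → ℂ) :
    MvPolynomial (Fin n) ℂ →ₐ[ℂ] MvPolynomial (Fin n) ℂ :=
  MvPolynomial.aeval (fun i => C (ε i) * X (σ i))

namespace TypeDRep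

section Polynomial

variable {R : Type*} [CommRing R] {n k : ℕ}

def yDiff (L : Finset (Fin n)) : MvPolynomial (Fin n) R := (∏ i ∈ L, X i) - ∏ i ∈ Lᶜ, X i

variable (R n k) in
def truncIdeal : Ideal (MvPolynomial (Fin n) R) :=
  Ideal.span ({ q | ∃ i : Fin n, q = X i ^ 2 } ∪
    { q | ∃ K : Finset (Fin n), K.card = k + 1 ∧ q = ∏ i ∈ K, X i })

variable (R n k) in
def balancedIdeal : Ideal (MvPolynomial (Fin n) R) :=
  Ideal.span ({ q | ∃ i : Fin n, q = X i ^ 2 } ∪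
    { q | ∃ L : Finset (Fin n), L.card = k ∧ q = yDiff L })

lemma yDiff_compl (L : Finset (Fin n)) : yDiff (R := R) Lᶜ = -yDiff L := by
  simp [yDiff]

def sqfreeExp (T : Finset (Fin n)) : Fin n →₀ ℕ := Finsupp.indicator T fun _ _ => 1

lemma sqfreeExp_apply (T : Finset (Fin n)) (i : Fin n) :
    sqfreeExp T i = if i ∈ T then 1 else 0 := by
  simp [sqfreeExp, Finsupp.indicator_apply]

lemma sqfreeExp_injective : Function.Injective (sqfreeExp (n := n)) := by
  intro T T' h
  ext i
  have := DFunLike.congr_fun h i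
  simp only [sqfreeExp_apply] at this
  split_ifs at this <;> simp_all

lemma prod_X_eq_monomial (T : Finset (Fin n)) :
    ∏ i ∈ T, (X i : MvPolynomial (Fin n) R) = monomial (sqfreeExp T) 1 := by
  simpa [sqfreeExp] using prod_X_pow (R := R) (fun _ => 1) T

lemma coeff_sqfreeExp_prod_X (T L : Finset (Fin n)) :
    coeff (sqfreeExp T) (∏ i ∈ L, (X i : MvPolynomial (Fin n) R)) = if L = T then 1 else 0 := by
  simp only [prod_X_eq_monomial, coeff_monomial, sqfreeExp_injective.eq_iff]

lemma truncIdeal_eq_span_monomial : truncIdeal R n k = Ideal.span ((monomial · 1) ''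
    ({ d | ∃ i : Fin n, d = Finsupp.single i 2 } ∪
      { d | ∃ K : Finset (Fin n), K.card = k + 1 ∧ d = sqfreeExp K })) := by
  rw [truncIdeal, Set.image_union]
  congr 2 <;> ext q <;> simp [X_pow_eq_monomial, prod_X_eq_monomial, eq_comm]

lemma coeff_sqfreeExp_eq_zero_of_mem {T : Finset (Fin n)} (hT : T.card ≤ k)
    {p : MvPolynomial (Fin n) R} (hp : p ∈ truncIdeal R n k) : coeff (sqfreeExp T) p = 0 := by
  by_contra hne
  rw [truncIdeal_eq_span_monomial, mem_ideal_span_monomial_image] at hp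
  obtain ⟨d, ⟨i, rfl⟩ | ⟨K, hK, rfl⟩, hle⟩ := hp _ (mem_support_iff.mpr hne)
  · have := hle i
    simp only [Finsupp.single_eq_same, sqfreeExp_apply] at this
    split_ifs at this <;> omega
  · have hKT : K ⊆ T := fun j hj => by
      have := hle j
      simp only [sqfreeExp_apply, hj, if_true] at this
      split_ifs at this with h <;> first | exact h | omega
    have := Finset.card_le_card hKT
    omega

lemma X_mul_prod_X_mem {T : Finset (Fin n)} (hT : T.card = k) (i : Fin n) :
    X i * ∏ j ∈ T, X j ∈ truncIdeal R n k := by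
  by_cases hi : i ∈ T
  · rw [← Finset.mul_prod_erase T _ hi, ← mul_assoc, ← sq]
    exact Ideal.mul_mem_right _ _ (Ideal.subset_span (Or.inl ⟨i, rfl⟩))
  · rw [← Finset.prod_insert hi]
    exact Ideal.subset_span (Or.inr ⟨_, by rw [Finset.card_insert_of_notMem hi, hT], rfl⟩)

lemma mul_yDiff_sub_mem {L : Finset (Fin n)} (hL : L.card = k) (hLc : Lᶜ.card = k)
    (p : MvPolynomial (Fin n) R) :
    p * yDiff L - C (coeff 0 p) * yDiff L ∈ truncIdeal R n k := by
  have hvars : idealOfVars (Fin n) R ≤ (truncIdeal R n k).colon {yDiff L} := by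
    refine Ideal.span_le.mpr ?_
    rintro _ ⟨i, rfl⟩
    rw [SetLike.mem_coe, Submodule.mem_colon_singleton, smul_eq_mul, yDiff, mul_sub]
    exact sub_mem (X_mul_prod_X_mem hL i) (X_mul_prod_X_mem hLc i)
  have hp : p - C (coeff 0 p) ∈ idealOfVars (Fin n) R := by
    rw [← pow_one (idealOfVars _ _), mem_pow_idealOfVars_iff']
    intro d hd
    obtain rfl : d = 0 := (Finsupp.degree_eq_zero_iff d).mp (by omega)
    simp
  rw [← sub_mul]
  simpa using hvars hp

end Polynomial

theorem smul_mem_of_sum_mem {R V ι : Type*} [Semiring R] [AddCommMonoid V] [Module R V]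
    (U : Submodule R V) (v : ι → V)
    (hsep : ∀ a b, a ≠ b → ∃ P : V →ₗ[R] V, U ≤ U.comap P ∧ P (v a) = v a ∧ P (v b) = 0 ∧
      ∀ c, P (v c) = v c ∨ P (v c) = 0)
    (s : Finset ι) (c : ι → R) (hs : ∑ i ∈ s, c i • v i ∈ U) {a : ι} (ha : a ∈ s) :
    c a • v a ∈ U := by
  classical
  induction s using Finset.strongInduction generalizing c with
  | H s ih =>
  by_cases hex : ∃ b ∈ s, b ≠ a
  · obtain ⟨b, hb, hba⟩ := hex
    obtain ⟨P, hPU, hPa, hPb, hP⟩ := hsep a b hba.symm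
    set c' : ι → R := fun i => if P (v i) = 0 then 0 else c i
    have hPc : ∀ i, c i • P (v i) = c' i • v i := fun i => by
      by_cases h0 : P (v i) = 0
      · simp [c', h0]
      · rw [(hP i).resolve_right h0]
        simp [c', h0]
    have hs' : ∑ i ∈ s.erase b, c' i • v i ∈ U := by
      rw [Finset.sum_erase s (by simp [c', hPb])]
      simpa [map_sum, hPc] using hPU hs
    have hc'a : c' a • v a = c a • v a := by
      by_cases h0 : P (v a) = 0
      · simp [hPa.symm.trans h0]
      · simp [c', h0]
    exact hc'a ▸ ih _ (Finset.erase_ssubset hb) c' hs' (Finset.mem_erase.mpr ⟨hba.symm, ha⟩)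
  · push Not at hex
    rwa [Finset.sum_eq_single_of_mem a ha fun b hb hba => absurd (hex b hb) hba] at hs

lemma exists_perm_image_eq {α : Type*} [DecidableEq α] {s t : Finset α} (h : s.card = t.card) :
    ∃ σ : Equiv.Perm α, s.image σ = t := by
  obtain ⟨σ, hσ⟩ := (Set.powersetCard.isPretransitive (α := α) (n := t.card)).exists_smul_eq
    ⟨s, by simp [h]⟩ ⟨t, by simp⟩
  exact ⟨σ, by simpa [Finset.smul_finset_def] using congrArg Subtype.val hσ⟩

lemma two_mul_card_subsets_containing {α : Type*} [Fintype α] [DecidableEq α] {k : ℕ}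
    (hα : Fintype.card α = 2 * k) (a : α) :
    2 * Fintype.card {L : Finset α // L.card = k ∧ a ∈ L} = (2 * k).choose k := by
  have hcompl : Fintype.card {L : Finset α // L.card = k ∧ a ∈ L} =
      Fintype.card {L : Finset α // L.card = k ∧ a ∉ L} := by
    refine Fintype.card_congr ((Equiv.subtypeEquiv (compl_involutive.toPerm _) fun L => ?_))
    have := hα ▸ L.card_le_univ
    simp only [Function.Involutive.coe_toPerm, Finset.card_compl, hα, Finset.mem_compl,
      not_not]
    constructor <;> rintro ⟨h, ha⟩ <;> exact ⟨by omega, ha⟩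
  have hsplit := Fintype.card_subtype_or_disjoint (fun L : Finset α => L.card = k ∧ a ∈ L)
    (fun L => L.card = k ∧ a ∉ L) fun _ hp hq L hL => (hq L hL).2 (hp L hL).2
  rw [two_mul]
  nth_rewrite 2 [hcompl]
  rw [← hsplit, ← hα, ← Fintype.card_finset_len]
  exact Fintype.card_congr (Equiv.subtypeEquivRight fun L => by tauto)

section Signed

variable {n : ℕ}

lemma image_compl_perm (σ : Equiv.Perm (Fin n)) (L : Finset (Fin n)) :
    Lᶜ.image σ = (L.image σ)ᶜ := by
  ext j
  simp only [Finset.mem_image, Finset.mem_compl, not_exists, not_and]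
  constructor
  · rintro ⟨i, hi, rfl⟩ x hx h
    exact hi (σ.injective h ▸ hx)
  · exact fun h => ⟨σ.symm j, fun hm => h _ hm (σ.apply_symm_apply j), σ.apply_symm_apply j⟩

lemma signedMap_prod_X (σ : Equiv.Perm (Fin n)) (ε : Fin n → ℂ) (L : Finset (Fin n)) :
    signedMap σ ε (∏ i ∈ L, X i) = C (∏ i ∈ L, ε i) * ∏ j ∈ L.image σ, X j := by
  simp [signedMap, Finset.prod_mul_distrib, Finset.prod_image σ.injective.injOn]

lemma prod_compl_eq_prod {ε : Fin n → ℂ} (hε : ∀ i, ε i = 1 ∨ ε i = -1) (hprod : ∏ i, ε i = 1)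
    (L : Finset (Fin n)) : ∏ i ∈ Lᶜ, ε i = ∏ i ∈ L, ε i := by
  have hsq : (∏ i ∈ L, ε i) ^ 2 = 1 := by
    rw [← Finset.prod_pow]
    exact Finset.prod_eq_one fun i _ => by rcases hε i with h | h <;> simp [h]
  calc ∏ i ∈ Lᶜ, ε i = (∏ i ∈ L, ε i) ^ 2 * ∏ i ∈ Lᶜ, ε i := by rw [hsq, one_mul]
    _ = (∏ i ∈ L, ε i) * ∏ i, ε i := by rw [← Finset.prod_mul_prod_compl L]; ring
    _ = ∏ i ∈ L, ε i := by rw [hprod, mul_one]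

lemma signedMap_yDiff (σ : Equiv.Perm (Fin n)) {ε : Fin n → ℂ} (hε : ∀ i, ε i = 1 ∨ ε i = -1)
    (hprod : ∏ i, ε i = 1) (L : Finset (Fin n)) :
    signedMap σ ε (yDiff L) = C (∏ i ∈ L, ε i) * yDiff (L.image σ) := by
  rw [yDiff, map_sub, signedMap_prod_X, signedMap_prod_X, prod_compl_eq_prod hε hprod,
    image_compl_perm, yDiff, mul_sub]

def flipSigns (F : Finset (Fin n)) (i : Fin n) : ℂ := if i ∈ F then -1 else 1

lemma prod_flipSigns (F A : Finset (Fin n)) : ∏ i ∈ A, flipSigns F i = (-1) ^ (A ∩ F).card := by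
  simp only [flipSigns]
  rw [Finset.prod_ite_mem, Finset.prod_const]

lemma flipSigns_eq_one_or_neg_one (F : Finset (Fin n)) (i : Fin n) :
    flipSigns F i = 1 ∨ flipSigns F i = -1 := by
  unfold flipSigns
  split_ifs <;> simp

lemma prod_univ_flipSigns {F : Finset (Fin n)} (hF : Even F.card) : ∏ i, flipSigns F i = 1 := by
  rw [prod_flipSigns, Finset.univ_inter, hF.neg_one_pow]

def flipProjection (F : Finset (Fin n)) : MvPolynomial (Fin n) ℂ →ₗ[ℂ] MvPolynomial (Fin n) ℂ :=
  (2⁻¹ : ℂ) • (LinearMap.id - (signedMap 1 (flipSigns F)).toLinearMap)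

lemma flipProjection_yDiff {F : Finset (Fin n)} (hF : Even F.card) (L : Finset (Fin n)) :
    flipProjection F (yDiff L) = if Even (L ∩ F).card then 0 else yDiff L := by
  have hmap := signedMap_yDiff 1 (flipSigns_eq_one_or_neg_one F) (prod_univ_flipSigns hF) L
  rw [prod_flipSigns, Equiv.Perm.coe_one, Finset.image_id] at hmap
  simp only [flipProjection, LinearMap.smul_apply, LinearMap.sub_apply, LinearMap.id_apply,
    AlgHom.toLinearMap_apply, hmap]
  split_ifs with h
  · rw [h.neg_one_pow]; simp
  · rw [(Nat.not_even_iff_odd.mp h).neg_one_pow, map_neg, map_one, neg_one_mul, sub_neg_eq_add,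
      ← two_smul ℂ, smul_smul, inv_mul_cancel₀ two_ne_zero, one_smul]

end Signed

section Quotient

variable {k : ℕ}

variable (k) in
abbrev TruncQuotient := MvPolynomial (Fin (2 * k)) ℂ ⧸ truncIdeal ℂ (2 * k) k

def yDiffClass (L : Finset (Fin (2 * k))) : TruncQuotient k :=
  Ideal.Quotient.mk (truncIdeal ℂ (2 * k) k) (yDiff L)

variable (k) in
def yDiffSpan : Submodule ℂ (TruncQuotient k) :=
  Submodule.span ℂ { z | ∃ L : Finset (Fin (2 * k)), L.card = k ∧ z = yDiffClass L }

lemma card_compl_of_card_eq {L : Finset (Fin (2 * k))} (hL : L.card = k) : Lᶜ.card = k := by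
  rw [Finset.card_compl, Fintype.card_fin, hL]
  omega

lemma mk_mul_yDiff {L : Finset (Fin (2 * k))} (hL : L.card = k) (p : MvPolynomial (Fin (2 * k)) ℂ) :
    Ideal.Quotient.mk (truncIdeal ℂ (2 * k) k) (p * yDiff L) = coeff 0 p • yDiffClass L := by
  rw [yDiffClass, ← Ideal.Quotient.mkₐ_eq_mk ℂ, ← map_smul, smul_eq_C_mul, Ideal.Quotient.mkₐ_eq_mk,
    Ideal.Quotient.eq]
  exact mul_yDiff_sub_mem hL (card_compl_of_card_eq hL) p

lemma ker_factor_eq_yDiffSpan (hle : truncIdeal ℂ (2 * k) k ≤ balancedIdeal ℂ (2 * k) k) :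
    (RingHom.ker (Ideal.Quotient.factor hle) : Set (TruncQuotient k)) = yDiffSpan k := by
  refine subset_antisymm (fun z hz => ?_) ?_
  · obtain ⟨p, rfl⟩ := Ideal.Quotient.mk_surjective z
    rw [SetLike.mem_coe, RingHom.mem_ker, Ideal.Quotient.factor_mk,
      Ideal.Quotient.eq_zero_iff_mem, balancedIdeal] at hz
    obtain ⟨m, f, g, rfl⟩ := Submodule.mem_span_set'.mp hz
    rw [map_sum]
    refine Submodule.sum_mem _ fun i _ => ?_
    obtain ⟨j, hj⟩ | ⟨L, hL, hg⟩ := (g i).2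
    · have : f i • (g i : MvPolynomial (Fin (2 * k)) ℂ) ∈ truncIdeal ℂ (2 * k) k :=
        Ideal.mul_mem_left _ _ (Ideal.subset_span (Or.inl ⟨j, hj⟩))
      rw [Ideal.Quotient.eq_zero_iff_mem.mpr this]
      exact zero_mem _
    · rw [smul_eq_mul, hg, mk_mul_yDiff hL]
      exact Submodule.smul_mem _ _ (Submodule.subset_span ⟨L, hL, rfl⟩)
  · refine (Submodule.span_le (p := (RingHom.ker _).restrictScalars ℂ)).mpr ?_
    rintro _ ⟨L, hL, rfl⟩
    rw [SetLike.mem_coe, Submodule.restrictScalars_mem, RingHom.mem_ker, yDiffClass,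
      Ideal.Quotient.factor_mk, Ideal.Quotient.eq_zero_iff_mem]
    exact Ideal.subset_span (Or.inr ⟨L, hL, rfl⟩)

variable (k) in
abbrev SubsetsContaining (a : Fin (2 * k)) := { L : Finset (Fin (2 * k)) // L.card = k ∧ a ∈ L }

lemma yDiffSpan_eq_span_subsetsContaining (a : Fin (2 * k)) :
    yDiffSpan k = Submodule.span ℂ (Set.range fun L : SubsetsContaining k a => yDiffClass L.1) := by
  refine le_antisymm (Submodule.span_le.mpr ?_) (Submodule.span_le.mpr ?_)
  · rintro _ ⟨L, hL, rfl⟩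
    by_cases ha : a ∈ L
    · exact Submodule.subset_span ⟨⟨L, hL, ha⟩, rfl⟩
    · have : yDiffClass L = -yDiffClass Lᶜ := by
        rw [yDiffClass, yDiffClass, yDiff_compl, map_neg, neg_neg]
      rw [SetLike.mem_coe, this]
      exact neg_mem (Submodule.subset_span
        ⟨⟨Lᶜ, card_compl_of_card_eq hL, Finset.mem_compl.mpr ha⟩, rfl⟩)
  · rintro _ ⟨L, rfl⟩
    exact Submodule.subset_span ⟨L.1, L.2.1, rfl⟩

lemma coeff_sqfreeExp_yDiff {a : Fin (2 * k)} (L₀ L : SubsetsContaining k a) :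
    coeff (sqfreeExp L₀.1) (yDiff (R := ℂ) L.1) = if L = L₀ then 1 else 0 := by
  have hcompl : L.1ᶜ ≠ L₀.1 := fun h => Finset.mem_compl.mp (h ▸ L₀.2.2) L.2.2
  simp [yDiff, coeff_sub, coeff_sqfreeExp_prod_X, hcompl, Subtype.ext_iff]

lemma linearIndependent_yDiffClass (a : Fin (2 * k)) :
    LinearIndependent ℂ fun L : SubsetsContaining k a => yDiffClass L.1 := by
  refine linearIndependent_iff'.mpr fun s g hsum L₀ hL₀ => ?_
  have hmem : ∑ L ∈ s, g L • yDiff L.1 ∈ truncIdeal ℂ (2 * k) k := by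
    rw [← Ideal.Quotient.eq_zero_iff_mem, ← Ideal.Quotient.mkₐ_eq_mk ℂ, map_sum, ← hsum]
    simp [yDiffClass, Ideal.Quotient.mkₐ_eq_mk]
  have := coeff_sqfreeExp_eq_zero_of_mem L₀.2.1.le hmem
  simpa [coeff_sum, coeff_sqfreeExp_yDiff, hL₀] using this

lemma two_mul_finrank_yDiffSpan (hk : 1 ≤ k) :
    2 * Module.finrank ℂ (yDiffSpan k) = (2 * k).choose k := by
  let a : Fin (2 * k) := ⟨0, by omega⟩
  rw [yDiffSpan_eq_span_subsetsContaining a, finrank_span_eq_card (linearIndependent_yDiffClass a),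
    two_mul_card_subsets_containing (Fintype.card_fin _)]

def IsWeylDInvariant (U : Submodule ℂ (TruncQuotient k)) : Prop :=
  ∀ (σ : Equiv.Perm (Fin (2 * k))) (ε : Fin (2 * k) → ℂ), (∀ i, ε i = 1 ∨ ε i = -1) →
    ∏ i, ε i = 1 → ∀ q, Ideal.Quotient.mk (truncIdeal ℂ (2 * k) k) q ∈ U →
      Ideal.Quotient.mk (truncIdeal ℂ (2 * k) k) (signedMap σ ε q) ∈ U

lemma exists_flip_separating {a : Fin (2 * k)} {L₀ L₁ : SubsetsContaining k a} (h : L₀ ≠ L₁) :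
    ∃ F : Finset (Fin (2 * k)), Even F.card ∧ ¬Even (L₀.1 ∩ F).card ∧ Even (L₁.1 ∩ F).card := by
  obtain ⟨i, hi₀, hi₁⟩ : ∃ i ∈ L₀.1, i ∉ L₁.1 := by
    by_contra! hsub
    exact h (Subtype.ext (Finset.eq_of_subset_of_card_le hsub (L₁.2.1.trans L₀.2.1.symm).le))
  obtain ⟨j, hj₀, hj₁⟩ : ∃ j, j ∉ L₀.1 ∧ j ∉ L₁.1 := by
    by_contra! hcover
    have hunion : L₀.1 ∪ L₁.1 = Finset.univ := Finset.eq_univ_of_forall fun j => by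
      by_cases hj : j ∈ L₀.1
      · exact Finset.mem_union_left _ hj
      · exact Finset.mem_union_right _ (hcover j hj)
    have hcard := Finset.card_union_add_card_inter L₀.1 L₁.1
    have hinter := Finset.card_pos.mpr ⟨a, Finset.mem_inter.mpr ⟨L₀.2.2, L₁.2.2⟩⟩
    rw [hunion, Finset.card_univ, Fintype.card_fin, L₀.2.1, L₁.2.1] at hcard
    omega
  have hij : i ≠ j := by rintro rfl; exact hj₀ hi₀
  refine ⟨{i, j}, by simp [Finset.card_pair hij], ?_, ?_⟩
  · simp [Finset.inter_insert_of_mem hi₀, Finset.inter_singleton_of_notMem hj₀]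
  · simp [Finset.inter_insert_of_notMem hi₁, Finset.inter_singleton_of_notMem hj₁]

lemma IsWeylDInvariant.mk_flipProjection_mem {U : Submodule ℂ (TruncQuotient k)}
    (hU : IsWeylDInvariant U) {F : Finset (Fin (2 * k))} (hF : Even F.card)
    {q : MvPolynomial (Fin (2 * k)) ℂ} (hq : Ideal.Quotient.mk _ q ∈ U) :
    Ideal.Quotient.mk (truncIdeal ℂ (2 * k) k) (flipProjection F q) ∈ U := by
  have hsigned := hU 1 _ (flipSigns_eq_one_or_neg_one F) (prod_univ_flipSigns hF) q hq
  rw [← Ideal.Quotient.mkₐ_eq_mk ℂ] at hq hsigned ⊢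
  simpa [flipProjection] using U.smul_mem (2⁻¹ : ℂ) (U.sub_mem hq hsigned)

lemma IsWeylDInvariant.exists_separating {U : Submodule ℂ (TruncQuotient k)}
    (hU : IsWeylDInvariant U) {a : Fin (2 * k)} {L₀ L₁ : SubsetsContaining k a} (h : L₀ ≠ L₁) :
    ∃ P : MvPolynomial (Fin (2 * k)) ℂ →ₗ[ℂ] MvPolynomial (Fin (2 * k)) ℂ,
      U.comap (Ideal.Quotient.mkₐ ℂ _).toLinearMap ≤
        (U.comap (Ideal.Quotient.mkₐ ℂ _).toLinearMap).comap P ∧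
      P (yDiff L₀.1) = yDiff L₀.1 ∧ P (yDiff L₁.1) = 0 ∧
      ∀ L : SubsetsContaining k a, P (yDiff L.1) = yDiff L.1 ∨ P (yDiff L.1) = 0 := by
  obtain ⟨F, hF, h₀, h₁⟩ := exists_flip_separating h
  refine ⟨flipProjection F, fun q hq => ?_, ?_, ?_, fun L => ?_⟩
  · simpa [Ideal.Quotient.mkₐ_eq_mk] using
      hU.mk_flipProjection_mem hF (by simpa [Ideal.Quotient.mkₐ_eq_mk] using hq)
  · simp [flipProjection_yDiff hF, h₀]
  · simp [flipProjection_yDiff hF, h₁]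
  · rw [flipProjection_yDiff hF]; split_ifs <;> simp

lemma IsWeylDInvariant.exists_yDiffClass_mem (hk : 1 ≤ k) {U : Submodule ℂ (TruncQuotient k)}
    (hU : IsWeylDInvariant U) (hUS : U ≤ yDiffSpan k) (hbot : U ≠ ⊥) :
    ∃ L : Finset (Fin (2 * k)), L.card = k ∧ yDiffClass L ∈ U := by
  let a : Fin (2 * k) := ⟨0, by omega⟩
  obtain ⟨u, hu, hu0⟩ := (Submodule.ne_bot_iff U).mp hbot
  have hu' := hUS hu
  rw [yDiffSpan_eq_span_subsetsContaining a, Submodule.mem_span_range_iff_exists_fun] at hu'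
  obtain ⟨c, rfl⟩ := hu'
  obtain ⟨L₀, hc⟩ : ∃ L₀, c L₀ ≠ 0 := by
    by_contra! hc
    simp [hc] at hu0
  have hsum : ∑ L ∈ Finset.univ, c L • yDiff (R := ℂ) L.1 ∈
      U.comap (Ideal.Quotient.mkₐ ℂ (truncIdeal ℂ (2 * k) k)).toLinearMap := by
    simpa [yDiffClass, Ideal.Quotient.mkₐ_eq_mk] using hu
  have := smul_mem_of_sum_mem _ (fun L : SubsetsContaining k a => yDiff L.1)
    (fun _ _ h => hU.exists_separating h) _ c hsum (Finset.mem_univ L₀)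
  refine ⟨L₀.1, L₀.2.1, ?_⟩
  simpa [yDiffClass, Ideal.Quotient.mkₐ_eq_mk, hc] using U.smul_mem (c L₀)⁻¹ this

lemma IsWeylDInvariant.yDiffSpan_le {U : Submodule ℂ (TruncQuotient k)} (hU : IsWeylDInvariant U)
    {L₀ : Finset (Fin (2 * k))} (hL₀ : L₀.card = k) (hmem : yDiffClass L₀ ∈ U) :
    yDiffSpan k ≤ U := by
  refine Submodule.span_le.mpr ?_
  rintro _ ⟨L, hL, rfl⟩
  obtain ⟨σ, hσ⟩ := exists_perm_image_eq (hL₀.trans hL.symm)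
  have := hU σ (fun _ => 1) (fun _ => Or.inl rfl) Finset.prod_const_one _ hmem
  rwa [signedMap_yDiff σ (fun _ => Or.inl rfl) Finset.prod_const_one, Finset.prod_const_one,
    map_one, one_mul, hσ] at this

theorem IsWeylDInvariant.eq_bot_or_eq_yDiffSpan (hk : 1 ≤ k) {U : Submodule ℂ (TruncQuotient k)}
    (hU : IsWeylDInvariant U) (hUS : U ≤ yDiffSpan k) : U = ⊥ ∨ U = yDiffSpan k := by
  refine or_iff_not_imp_left.mpr fun hbot => le_antisymm hUS ?_
  obtain ⟨L, hL, hmem⟩ := hU.exists_yDiffClass_mem hk hUS hbot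
  exact hU.yDiffSpan_le hL hmem

end Quotient

end TypeDRep

open TypeDRep

/-- for the surjection
`p : ℂ[y]/(y_i², y_K : |K|=k+1) ↠ ℂ[y]/I_{(2k,2k)}`, the kernel of `p` is the linear span
of the elements `y_L - y_{L̄}` (`|L| = k`), it has dimension `C(2k,k)/2`, and it is an
irreducible representation of the type `D_{2k}` Weyl group of evenly-signed permutations. -/
theorem stmt15 (k : ℕ) (hk : 1 ≤ k)
    (I1 I2 : Ideal (MvPolynomial (Fin (2 * k)) ℂ))
    (hI1 : I1 = Ideal.span ({ q | ∃ i : Fin (2 * k), q = X i ^ 2 } ∪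
      { q | ∃ K : Finset (Fin (2 * k)), K.card = k + 1 ∧ q = ∏ i ∈ K, X i }))
    (hI2 : I2 = Ideal.span ({ q | ∃ i : Fin (2 * k), q = X i ^ 2 } ∪
      { q | ∃ L : Finset (Fin (2 * k)), L.card = k ∧
          q = (∏ i ∈ L, X i) - ∏ i ∈ Lᶜ, X i }))
    (hle : I1 ≤ I2)
    (S : Submodule ℂ (MvPolynomial (Fin (2 * k)) ℂ ⧸ I1))
    (hS : S = Submodule.span ℂ { z | ∃ L : Finset (Fin (2 * k)), L.card = k ∧
        z = Ideal.Quotient.mk I1 ((∏ i ∈ L, X i) - ∏ i ∈ Lᶜ, X i) }) :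
    (RingHom.ker (Ideal.Quotient.factor (S := I1) (T := I2) hle) :
        Set (MvPolynomial (Fin (2 * k)) ℂ ⧸ I1)) = (S : Set _) ∧
    2 * Module.finrank ℂ S = (2 * k).choose k ∧
    ∀ U : Submodule ℂ (MvPolynomial (Fin (2 * k)) ℂ ⧸ I1), U ≤ S →
      (∀ (σ : Equiv.Perm (Fin (2 * k))) (ε : Fin (2 * k) → ℂ),
        (∀ i, ε i = 1 ∨ ε i = -1) → (∏ i, ε i) = 1 →
        ∀ q : MvPolynomial (Fin (2 * k)) ℂ, Ideal.Quotient.mk I1 q ∈ U →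
          Ideal.Quotient.mk I1 (signedMap σ ε q) ∈ U) →
      U = ⊥ ∨ U = S := by
  obtain rfl : I1 = truncIdeal ℂ (2 * k) k := hI1
  obtain rfl : I2 = balancedIdeal ℂ (2 * k) k := hI2
  obtain rfl : S = yDiffSpan k := hS
  exact ⟨ker_factor_eq_yDiffSpan hle, two_mul_finrank_yDiffSpan hk,
    fun U hUS hU => IsWeylDInvariant.eq_bot_or_eq_yDiffSpan hk hU hUS⟩
end
end

section
/- Let $T_\lambda\subseteq\mathbb{C}[y_1,\dots,y_4]$ be the ideal for the partition $\lambda=(4,2,2)$ of $8$ (dual to $(b_1,b_1,b_2,b_2)=(3,3,1,1)$): explicitly, $T_\lambda$ is generated by $y_1^2+y_2^2+y_3^2+y_4^2$ and the products $y_i^2 y_j^2$ for all $1\leq i<j\leq 4$. Then $\dim_\mathbb{C}\mathbb{C}[y_1,\dots,y_4]/T_\lambda = \frac{4!\cdot 2^4}{3!\cdot 1!} = 64$. -/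
/-! Eliminating `y₀` via `y₀² = -s`, where `s = y₁² + ⋯ + yₙ²`, identifies `K[y₀, …, yₙ] ⧸ T`
with `B[t] ⧸ (t² + s)` for `B = K[y₁, …, yₙ] ⧸ (yᵢ² yⱼ² : all i, j)`: the relation `y₀² yⱼ² = 0`
becomes `s yⱼ² = 0`, which holds in `B`, and conversely `yⱼ⁴ = yⱼ² s - ∑_{i ≠ j} yᵢ² yⱼ²` lies
in `T`. As `t² + s` is monic, the dimension is `2 · dim B`. Finally `B` is a monomial quotient
whose standard monomials are those with all exponents `≤ 3` and at most one exponent `≥ 2`;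
there are `32` of them when `n = 3`. -/

open MvPolynomial

noncomputable section

theorem Finsupp.single_add_single_le_iff {σ : Type*} {i j : σ} {a b : ℕ} {d : σ →₀ ℕ} :
    single i a + single j b ≤ d ↔ a ≤ d i ∧ b ≤ d j ∧ (i = j → a + b ≤ d i) := by
  classical
  by_cases h : i = j
  · subst h
    rw [← single_add, single_le_iff]
    simp only [forall_const]
    omega
  · simp only [le_def, add_apply, single_apply, h, false_imp_iff, and_true]
    constructor
    · intro hd
      have := hd i
      have := hd j
      simp_all [Ne.symm h]
    · rintro ⟨hi, hj⟩ k
      split_ifs <;> subst_vars <;> simp_all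

namespace MvPolynomial

variable {σ R : Type*} [CommRing R]

theorem isCompl_restrictSupport_compl (s : Set (σ →₀ ℕ)) :
    IsCompl (restrictSupport R s) (restrictSupport R sᶜ) := by
  constructor
  · rw [Submodule.disjoint_def]
    intro p hs hsc
    rw [mem_restrictSupport_iff] at hs hsc
    rw [← support_eq_empty, Finset.eq_empty_iff_forall_notMem]
    exact fun d hd => hsc hd (hs hd)
  · rw [codisjoint_iff, restrictSupport_eq_span, restrictSupport_eq_span, ← Submodule.span_union,
      ← Set.image_union, Set.union_compl_self, ← restrictSupport_eq_span, restrictSupport_univ]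

theorem restrictScalars_span_monomial_eq_restrictSupport (S : Set (σ →₀ ℕ)) :
    (Ideal.span ((monomial · (1 : R)) '' S)).restrictScalars R =
      restrictSupport R (upperClosure S) := by
  ext p
  simp [mem_ideal_span_monomial_image, mem_restrictSupport_iff, Set.subset_def]

/-- `(upperClosure S)ᶜ` is the set of exponents of the standard monomials, those divisible by no
generator. -/
def basisQuotientSpanMonomial (S : Set (σ →₀ ℕ)) :
    Module.Basis ((upperClosure S : Set (σ →₀ ℕ))ᶜ : Set _) R
      (MvPolynomial σ R ⧸ Ideal.span ((monomial · (1 : R)) '' S)) :=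
  (basisRestrictSupport R _).map
    ((Submodule.quotientEquivOfIsCompl _ _ (isCompl_restrictSupport_compl _)).symm ≪≫ₗ
      Submodule.quotEquivOfEq _ _ (restrictScalars_span_monomial_eq_restrictSupport S).symm ≪≫ₗ
      Submodule.Quotient.restrictScalarsEquiv R _)

end MvPolynomial

theorem Polynomial.Monic.finrank_adjoinRoot {K B : Type*} [CommRing K] [StrongRankCondition K]
    [CommRing B] [Nontrivial B] [Algebra K B] [Module.Free K B] {f : Polynomial B}
    (hf : f.Monic) :
    Module.finrank K (AdjoinRoot f) = Module.finrank K B * f.natDegree := by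
  have := hf.free_adjoinRoot
  rw [← Module.finrank_mul_finrank K B, (AdjoinRoot.powerBasis' hf).finrank,
    AdjoinRoot.powerBasis'_dim]

section

variable (σ K : Type*) [CommRing K]

def sumSqPairIdeal [Fintype σ] : Ideal (MvPolynomial σ K) :=
  Ideal.span ({∑ i, X i ^ 2} ∪ {q | ∃ i j, i ≠ j ∧ q = X i ^ 2 * X j ^ 2})

def sqPairIdeal : Ideal (MvPolynomial σ K) :=
  Ideal.span (Set.range fun p : σ × σ => X p.1 ^ 2 * X p.2 ^ 2)

def sqPairExponents : Set (σ →₀ ℕ) :=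
  Set.range fun p : σ × σ => Finsupp.single p.1 2 + Finsupp.single p.2 2

def sqAddSumSq [Fintype σ] : Polynomial (MvPolynomial σ K ⧸ sqPairIdeal σ K) :=
  Polynomial.X ^ 2 + Polynomial.C (Ideal.Quotient.mk _ (∑ i, X i ^ 2))

variable {σ K}

theorem sqPairIdeal_eq_span_monomial :
    sqPairIdeal σ K = Ideal.span ((monomial · (1 : K)) '' sqPairExponents σ) := by
  rw [sqPairIdeal, sqPairExponents, ← Set.range_comp]
  congr! with p
  simp [X_pow_eq_monomial, monomial_mul]

theorem X_sq_mul_X_sq_mem_sqPairIdeal (i j : σ) : X i ^ 2 * X j ^ 2 ∈ sqPairIdeal σ K :=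
  Ideal.subset_span ⟨(i, j), rfl⟩

theorem sum_X_sq_mul_X_sq_mem_sqPairIdeal [Fintype σ] (j : σ) :
    (∑ i, X i ^ 2) * X j ^ 2 ∈ sqPairIdeal σ K := by
  rw [Finset.sum_mul]
  exact Ideal.sum_mem _ fun i _ => X_sq_mul_X_sq_mem_sqPairIdeal i j

theorem sum_X_sq_mem_sumSqPairIdeal [Fintype σ] : ∑ i, X i ^ 2 ∈ sumSqPairIdeal σ K :=
  Ideal.subset_span (Or.inl rfl)

theorem X_sq_mul_X_sq_mem_sumSqPairIdeal [Fintype σ] (i j : σ) :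
    X i ^ 2 * X j ^ 2 ∈ sumSqPairIdeal σ K := by
  classical
  have mem_of_ne {i j : σ} (h : i ≠ j) : X i ^ 2 * X j ^ 2 ∈ sumSqPairIdeal σ K :=
    Ideal.subset_span (Or.inr ⟨i, j, h, rfl⟩)
  obtain rfl | hij := eq_or_ne i j
  · have : X i ^ 2 * X i ^ 2 = X i ^ 2 * ∑ k, X k ^ 2 -
        ∑ k ∈ Finset.univ.erase i, (X i ^ 2 * X k ^ 2 : MvPolynomial σ K) := by
      rw [Finset.mul_sum, ← Finset.add_sum_erase _ _ (Finset.mem_univ i), add_sub_cancel_right]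
    rw [this]
    exact Ideal.sub_mem _ (Ideal.mul_mem_left _ _ sum_X_sq_mem_sumSqPairIdeal)
      (Ideal.sum_mem _ fun k hk => mem_of_ne (Finset.ne_of_mem_erase hk).symm)
  · exact mem_of_ne hij

theorem mem_compl_upperClosure_sqPairExponents {d : σ →₀ ℕ} :
    d ∈ (upperClosure (sqPairExponents σ) : Set (σ →₀ ℕ))ᶜ ↔
      (∀ i, d i < 4) ∧ ∀ i j, i ≠ j → d i < 2 ∨ d j < 2 := by
  simp only [sqPairExponents, Set.mem_compl_iff, SetLike.mem_coe, mem_upperClosure,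
    Set.exists_range_iff, Prod.exists, Finsupp.single_add_single_le_iff, not_exists]
  constructor
  · intro h
    refine ⟨fun i => ?_, fun i j hij => ?_⟩
    · have := h i i
      simp only [forall_const] at this
      omega
    · have := h i j
      simp only [hij, false_imp_iff, and_true] at this
      omega
  · rintro ⟨h4, h2⟩ i j
    obtain rfl | hij := eq_or_ne i j
    · have := h4 i
      simp only [forall_const]
      omega
    · have := h2 i j hij
      simp only [hij, false_imp_iff, and_true]
      omega

def standardSqPairExponentsEquiv [Finite σ] :
    ((upperClosure (sqPairExponents σ) : Set (σ →₀ ℕ))ᶜ : Set (σ →₀ ℕ)) ≃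
      {g : σ → Fin 4 // ∀ i j, i ≠ j → (g i : ℕ) < 2 ∨ (g j : ℕ) < 2} where
  toFun d := ⟨fun i => ⟨d.1 i, (mem_compl_upperClosure_sqPairExponents.1 d.2).1 i⟩,
    (mem_compl_upperClosure_sqPairExponents.1 d.2).2⟩
  invFun g := ⟨Finsupp.equivFunOnFinite.symm fun i => g.1 i,
    mem_compl_upperClosure_sqPairExponents.2 ⟨fun i => (g.1 i).isLt, g.2⟩⟩
  left_inv d := by ext; simp
  right_inv g := by ext; simp

theorem finrank_quotient_sqPairIdeal [Finite σ] [Nontrivial K] :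
    Module.finrank K (MvPolynomial σ K ⧸ sqPairIdeal σ K) =
      Nat.card {g : σ → Fin 4 // ∀ i j, i ≠ j → (g i : ℕ) < 2 ∨ (g j : ℕ) < 2} := by
  rw [sqPairIdeal_eq_span_monomial,
    Module.finrank_eq_nat_card_basis (basisQuotientSpanMonomial _),
    Nat.card_congr standardSqPairExponentsEquiv]

instance : Module.Free K (MvPolynomial σ K ⧸ sqPairIdeal σ K) := by
  rw [sqPairIdeal_eq_span_monomial]
  exact .of_basis (basisQuotientSpanMonomial _)

instance [Nontrivial K] : Nontrivial (MvPolynomial σ K ⧸ sqPairIdeal σ K) := by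
  rw [Ideal.Quotient.nontrivial_iff, sqPairIdeal_eq_span_monomial, Ne, Ideal.eq_top_iff_one,
    mem_ideal_span_monomial_image]
  intro h
  obtain ⟨_, ⟨⟨i, j⟩, rfl⟩, hle⟩ := h 0 (by simp)
  simpa using (Finsupp.single_add_single_le_iff.1 hle).1

theorem sqAddSumSq_monic [Fintype σ] : (sqAddSumSq σ K).Monic :=
  Polynomial.monic_X_pow_add_C _ two_ne_zero

theorem natDegree_sqAddSumSq [Fintype σ] [Nontrivial K] : (sqAddSumSq σ K).natDegree = 2 :=
  Polynomial.natDegree_X_pow_add_C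

theorem eval₂_sqAddSumSq [Fintype σ] {S : Type*} [CommRing S]
    (φ : MvPolynomial σ K ⧸ sqPairIdeal σ K →+* S) (x : S) :
    (sqAddSumSq σ K).eval₂ φ x = x ^ 2 + φ (Ideal.Quotient.mk _ (∑ i, X i ^ 2)) := by
  simp only [sqAddSumSq, Polynomial.eval₂_add, Polynomial.eval₂_X_pow, Polynomial.eval₂_C]

theorem root_sqAddSumSq_sq [Fintype σ] : AdjoinRoot.root (sqAddSumSq σ K) ^ 2 =
    -AdjoinRoot.of _ (Ideal.Quotient.mk _ (∑ i, X i ^ 2)) := by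
  have h := AdjoinRoot.eval₂_root (sqAddSumSq σ K)
  rw [eval₂_sqAddSumSq] at h
  exact eq_neg_of_add_eq_zero_left h

theorem of_mk_eq_zero_of_mem_sqPairIdeal [Fintype σ] {p : MvPolynomial σ K}
    (hp : p ∈ sqPairIdeal σ K) : AdjoinRoot.of (sqAddSumSq σ K) (Ideal.Quotient.mk _ p) = 0 := by
  rw [Ideal.Quotient.eq_zero_iff_mem.2 hp, map_zero]

end

section

variable (n : ℕ) (K : Type*) [CommRing K]

def adjoinRootCoords : Fin (n + 1) → AdjoinRoot (sqAddSumSq (Fin n) K) :=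
  Fin.cons (AdjoinRoot.root _) fun i => AdjoinRoot.of _ (Ideal.Quotient.mk _ (X i))

theorem sumSqPairIdeal_le_ker_aeval_adjoinRootCoords :
    sumSqPairIdeal (Fin (n + 1)) K ≤ RingHom.ker (aeval (adjoinRootCoords n K)) := by
  refine Ideal.span_le.2 ?_
  rintro q (rfl | ⟨i, j, hij, rfl⟩) <;>
    simp only [SetLike.mem_coe, RingHom.mem_ker, Fin.sum_univ_succ, map_add, map_sum, map_mul,
      map_pow, aeval_X, adjoinRootCoords]
  · rw [Fin.cons_zero, root_sqAddSumSq_sq, neg_add_eq_zero]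
    simp only [Fin.cons_succ, map_sum, map_pow]
  · have root_sq_mul (j : Fin n) : AdjoinRoot.root (sqAddSumSq (Fin n) K) ^ 2 *
        AdjoinRoot.of _ (Ideal.Quotient.mk _ (X j)) ^ 2 = 0 := by
      rw [root_sqAddSumSq_sq, neg_mul, ← map_pow, ← map_pow, ← map_mul, ← map_mul,
        of_mk_eq_zero_of_mem_sqPairIdeal (sum_X_sq_mul_X_sq_mem_sqPairIdeal j), neg_zero]
    cases i using Fin.cases <;> cases j using Fin.cases <;>
      simp only [Fin.cons_zero, Fin.cons_succ]
    · exact absurd rfl hij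
    · exact root_sq_mul _
    · rw [mul_comm]
      exact root_sq_mul _
    · simp only [← map_pow, ← map_mul]
      exact of_mk_eq_zero_of_mem_sqPairIdeal (X_sq_mul_X_sq_mem_sqPairIdeal _ _)

theorem sqPairIdeal_le_comap_rename_succ :
    sqPairIdeal (Fin n) K ≤ (sumSqPairIdeal (Fin (n + 1)) K).comap (rename Fin.succ) := by
  refine Ideal.span_le.2 (Set.range_subset_iff.2 fun p => ?_)
  simpa only [SetLike.mem_coe, Ideal.mem_comap, map_mul, map_pow, rename_X]
    using X_sq_mul_X_sq_mem_sumSqPairIdeal _ _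

def quotientSumSqPairToAdjoinRoot :
    MvPolynomial (Fin (n + 1)) K ⧸ sumSqPairIdeal (Fin (n + 1)) K →ₐ[K]
      AdjoinRoot (sqAddSumSq (Fin n) K) :=
  Ideal.Quotient.liftₐ _ (aeval (adjoinRootCoords n K)) fun _ ha =>
    RingHom.mem_ker.1 (sumSqPairIdeal_le_ker_aeval_adjoinRootCoords n K ha)

def adjoinRootToQuotientSumSqPair : AdjoinRoot (sqAddSumSq (Fin n) K) →ₐ[K]
    MvPolynomial (Fin (n + 1)) K ⧸ sumSqPairIdeal (Fin (n + 1)) K :=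
  AdjoinRoot.liftAlgHom _ (Ideal.quotientMapₐ _ _ (sqPairIdeal_le_comap_rename_succ n K))
    (Ideal.Quotient.mk _ (X 0)) (by
      rw [eval₂_sqAddSumSq, AlgHom.coe_toRingHom, Ideal.quotient_map_mkₐ,
        Ideal.Quotient.mkₐ_eq_mk, ← map_pow, ← map_add, Ideal.Quotient.eq_zero_iff_mem]
      simpa only [map_sum, map_pow, rename_X, Fin.sum_univ_succ]
        using sum_X_sq_mem_sumSqPairIdeal (σ := Fin (n + 1)) (K := K))

@[simp]
theorem quotientSumSqPairToAdjoinRoot_mk_X_zero :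
    quotientSumSqPairToAdjoinRoot n K (Ideal.Quotient.mk _ (X 0)) = AdjoinRoot.root _ :=
  aeval_X _ _

@[simp]
theorem quotientSumSqPairToAdjoinRoot_mk_X_succ (i : Fin n) :
    quotientSumSqPairToAdjoinRoot n K (Ideal.Quotient.mk _ (X i.succ)) =
      AdjoinRoot.of _ (Ideal.Quotient.mk _ (X i)) :=
  aeval_X _ _

@[simp]
theorem adjoinRootToQuotientSumSqPair_root :
    adjoinRootToQuotientSumSqPair n K (AdjoinRoot.root _) = Ideal.Quotient.mk _ (X 0) :=
  AdjoinRoot.liftAlgHom_root _ _ _ _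

@[simp]
theorem adjoinRootToQuotientSumSqPair_of_mk (p : MvPolynomial (Fin n) K) :
    adjoinRootToQuotientSumSqPair n K (AdjoinRoot.of _ (Ideal.Quotient.mk _ p)) =
      Ideal.Quotient.mk _ (rename Fin.succ p) :=
  AdjoinRoot.liftAlgHom_of _ _ _ _ _

def quotientSumSqPairEquivAdjoinRoot :
    (MvPolynomial (Fin (n + 1)) K ⧸ sumSqPairIdeal (Fin (n + 1)) K) ≃ₐ[K]
      AdjoinRoot (sqAddSumSq (Fin n) K) :=
  AlgEquiv.ofAlgHom (quotientSumSqPairToAdjoinRoot n K) (adjoinRootToQuotientSumSqPair n K)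
    (AdjoinRoot.algHom_ext' (Ideal.Quotient.algHom_ext K (algHom_ext fun i => by simp))
      (by simp))
    (Ideal.Quotient.algHom_ext K (algHom_ext fun i => by cases i using Fin.cases <;> simp))

theorem finrank_quotient_sumSqPairIdeal [Nontrivial K] :
    Module.finrank K (MvPolynomial (Fin (n + 1)) K ⧸ sumSqPairIdeal (Fin (n + 1)) K) =
      Nat.card {g : Fin n → Fin 4 // ∀ i j, i ≠ j → (g i : ℕ) < 2 ∨ (g j : ℕ) < 2} * 2 := by
  rw [(quotientSumSqPairEquivAdjoinRoot n K).toLinearEquiv.finrank_eq,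
    sqAddSumSq_monic.finrank_adjoinRoot, natDegree_sqAddSumSq, finrank_quotient_sqPairIdeal]

end

/-- for the partition `λ = (4,2,2)` of `8`, the ideal `T_λ ⊆ ℂ[y₁,…,y₄]`
generated by `y₁²+y₂²+y₃²+y₄²` and the products `y_i² y_j²` (`i < j`) has quotient of
dimension `4! · 2⁴ / (3! · 1!) = 64`. -/
theorem stmt16 (T : Ideal (MvPolynomial (Fin 4) ℂ))
    (hT : T = Ideal.span ({∑ i : Fin 4, X i ^ 2} ∪
      { q | ∃ i j : Fin 4, i ≠ j ∧ q = X i ^ 2 * X j ^ 2 })) :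
    Module.finrank ℂ (MvPolynomial (Fin 4) ℂ ⧸ T) = 64 := by
  subst hT
  rw [← sumSqPairIdeal, finrank_quotient_sumSqPairIdeal 3, Nat.card_eq_fintype_card]
  decide
end
end

section
/- Let $I\subseteq\mathbb{C}[y_1,\dots,y_5]$ be the ideal generated by: $y_i^5$ for $1\leq i\leq 5$; the power sums $\sum_{i=1}^5 y_i^{2j}$ for $1\leq j\leq 5$; and all products $y_i y_j y_k$ for $1\leq i<j<k\leq 5$. Then the monomial $y_1^2 y_2^2$ is nonzero in the quotient ring $\mathbb{C}[y_1,\dots,y_5]/I$. -/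
/-!
Let `G_{ab} = Re (z_a + i z_b)⁴` and `F = G_{34} - G_{12}`. The product `y_i y_j y_k` of three
distinct variables and `y_i⁵` kill `F` as differential operators since every monomial of `F` has
degree 4 and involves at most two variables; `∑ y_i²` kills each `G_{ab}` (harmonicity) and
`∑ y_i⁴` sends both to the same constant. Hence the apolarity functional `p ↦ p(∂) F` vanishes on
`I`, while `∂₁²∂₂² F ≠ 0`.
-/

open MvPolynomial Finsupp

noncomputable section

theorem map_eq_zero_of_mem_ideal_span {A M F : Type*} [CommSemiring A] [AddCommMonoid M]
    [FunLike F A M] [AddMonoidHomClass F A M] (φ : F) {S : Set A}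
    (hS : ∀ s ∈ S, ∀ q, φ (q * s) = 0) {p : A} (hp : p ∈ Ideal.span S) : φ p = 0 := by
  suffices ∀ q, φ (q * p) = 0 by simpa using this 1
  induction hp using Submodule.span_induction with
  | mem s hs => exact hS s hs
  | zero => simp
  | add x y _ _ hx hy => simp [mul_add, hx, hy]
  | smul a x _ hx => simpa [mul_assoc] using fun q => hx (q * a)

variable {σ R : Type*} [CommRing R]

/-- Up to the factor `-1/24`, this is `p ↦ p(∂) Re (z_a + i z_b)⁴`, as
`Re (z_a + i z_b)⁴ = z_a⁴ - 6 z_a² z_b² + z_b⁴`. -/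
def quarticDual (a b : σ) : MvPolynomial σ R →ₗ[R] R :=
  lcoeff R (single a 2 + single b 2) - lcoeff R (single a 4) - lcoeff R (single b 4)

theorem quarticDual_mul_monomial_eq_zero (a b : σ) (q : MvPolynomial σ R) {s : σ →₀ ℕ}
    (hs : 4 < s.degree ∨ ∃ i ∈ s.support, i ≠ a ∧ i ≠ b) :
    quarticDual a b (q * monomial s 1) = 0 := by
  classical
  have key : ∀ m : σ →₀ ℕ, m.degree = 4 → m.support ⊆ {a, b} → ¬ s ≤ m := by
    intro m hm hma hsm
    rcases hs with hs | ⟨i, hi, hia, hib⟩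
    · exact (degree_mono hsm).not_gt (hm ▸ hs)
    · simpa [hia, hib] using hma (support_mono hsm hi)
  have hsingle : ∀ c ∈ ({a, b} : Finset σ), ¬ s ≤ single c 4 := fun c hc =>
    key _ (degree_single c 4) (support_single_subset.trans (by simpa using hc))
  have hpair : ¬ s ≤ single a 2 + single b 2 :=
    key _ (by simp) (Finsupp.support_add.trans (Finset.union_subset
      (support_single_subset.trans (by simp)) (support_single_subset.trans (by simp))))
  simp [quarticDual, coeff_mul_monomial', hpair, hsingle]

theorem quarticDual_mul_X_pow_of_ne (a b : σ) (q : MvPolynomial σ R) {i : σ} (hia : i ≠ a)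
    (hib : i ≠ b) {n : ℕ} (hn : n ≠ 0) : quarticDual a b (q * X i ^ n) = 0 := by
  rw [X_pow_eq_monomial]
  exact quarticDual_mul_monomial_eq_zero a b q (.inr ⟨i, by simpa using hn, hia, hib⟩)

theorem quarticDual_mul_sum_X_pow_eq_add [Fintype σ] {a b : σ} (hab : a ≠ b)
    (q : MvPolynomial σ R) {n : ℕ} (hn : n ≠ 0) :
    quarticDual a b (q * ∑ i, X i ^ n) =
      quarticDual a b (q * X a ^ n) + quarticDual a b (q * X b ^ n) := by
  rw [Finset.mul_sum, map_sum]
  exact Finset.sum_eq_add_of_mem a b (by simp) (by simp) hab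
    fun i _ ⟨hia, hib⟩ => quarticDual_mul_X_pow_of_ne a b q hia hib hn

theorem quarticDual_mul_sum_X_sq [Fintype σ] {a b : σ} (hab : a ≠ b) (q : MvPolynomial σ R) :
    quarticDual a b (q * ∑ i, X i ^ 2) = 0 := by
  classical
  rw [quarticDual_mul_sum_X_pow_eq_add hab q two_ne_zero]
  simp [quarticDual, X_pow_eq_monomial, coeff_mul_monomial', single_le_iff, hab, hab.symm,
    ← single_tsub]

theorem quarticDual_mul_sum_X_pow_four [Fintype σ] {a b : σ} (hab : a ≠ b)
    (q : MvPolynomial σ R) : quarticDual a b (q * ∑ i, X i ^ 4) = -2 * coeff 0 q := by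
  classical
  rw [quarticDual_mul_sum_X_pow_eq_add hab q four_ne_zero]
  simp [quarticDual, X_pow_eq_monomial, coeff_mul_monomial', single_le_iff, hab, hab.symm]
  ring

theorem quarticDual_mul_X_pow_eq_zero (a b : σ) (q : MvPolynomial σ R) (i : σ) {n : ℕ}
    (hn : 4 < n) : quarticDual a b (q * X i ^ n) = 0 := by
  rw [X_pow_eq_monomial]
  exact quarticDual_mul_monomial_eq_zero a b q (.inl (by simpa using hn))

theorem quarticDual_mul_prod_X_eq_zero (a b : σ) (q : MvPolynomial σ R) {K : Finset σ}
    (hK : 2 < K.card) : quarticDual a b (q * ∏ i ∈ K, X i) = 0 := by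
  classical
  obtain ⟨i, hiK, hi⟩ := Finset.exists_mem_notMem_of_card_lt_card
    ((Finset.card_le_two (a := a) (b := b)).trans_lt hK)
  have hsupp : i ∈ (∑ j ∈ K, single j 1 : σ →₀ ℕ).support := by
    simp [finsetSum_apply, single_apply, hiK]
  rw [Finset.mem_insert, Finset.mem_singleton, not_or] at hi
  simp only [X, ← monomial_sum_one]
  exact quarticDual_mul_monomial_eq_zero a b q (.inr ⟨i, hsupp, hi⟩)

theorem quarticDual_mul_sum_X_pow_eq [Fintype σ] {a b c d : σ} (hab : a ≠ b) (hcd : c ≠ d)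
    (q : MvPolynomial σ R) {j : ℕ} (hj : 1 ≤ j) :
    quarticDual a b (q * ∑ i, X i ^ (2 * j)) = quarticDual c d (q * ∑ i, X i ^ (2 * j)) := by
  obtain rfl | rfl | hj : j = 1 ∨ j = 2 ∨ 3 ≤ j := by omega
  · rw [quarticDual_mul_sum_X_sq hab, quarticDual_mul_sum_X_sq hcd]
  · rw [quarticDual_mul_sum_X_pow_four hab, quarticDual_mul_sum_X_pow_four hcd]
  · have h4 : 4 < 2 * j := by omega
    simp only [Finset.mul_sum, map_sum, quarticDual_mul_X_pow_eq_zero _ _ _ _ h4]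

theorem quarticDual_X_sq_mul_X_sq {a b : σ} (hab : a ≠ b) :
    quarticDual a b (X a ^ 2 * X b ^ 2 : MvPolynomial σ R) = 1 := by
  classical
  have hne : ∀ c, single a 2 + single b 2 ≠ single c 4 := fun c h => by
    have := DFunLike.congr_fun h a
    by_cases hc : c = a <;> simp [hab, hc] at this
  simp [quarticDual, X_pow_eq_monomial, monomial_mul, hne]

theorem quarticDual_X_sq_mul_X_sq_of_ne (a b : σ) {c d : σ} (hc : c ≠ a) (hd : c ≠ b) :
    quarticDual a b (X c ^ 2 * X d ^ 2 : MvPolynomial σ R) = 0 := by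
  rw [mul_comm]
  exact quarticDual_mul_X_pow_of_ne a b (X d ^ 2) hc hd two_ne_zero

/-- `y₁² y₂²` is nonzero in `ℂ[y₁,…,y₅]/I`, where `I` is generated by
`y_i⁵`, the power sums `∑ y_i^{2j}` for `1 ≤ j ≤ 5`, and the products `y_i y_j y_k`. -/
theorem stmt17 (I : Ideal (MvPolynomial (Fin 5) ℂ))
    (hI : I = Ideal.span ({ q | ∃ i : Fin 5, q = X i ^ 5 } ∪
      { q | ∃ j : ℕ, 1 ≤ j ∧ j ≤ 5 ∧ q = ∑ i : Fin 5, X i ^ (2 * j) } ∪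
      { q | ∃ K : Finset (Fin 5), K.card = 3 ∧ q = ∏ i ∈ K, X i })) :
    (X 0 : MvPolynomial (Fin 5) ℂ) ^ 2 * X 1 ^ 2 ∉ I := by
  set φ : MvPolynomial (Fin 5) ℂ →ₗ[ℂ] ℂ := quarticDual 0 1 - quarticDual 2 3
  have hφ : φ (X 0 ^ 2 * X 1 ^ 2) = 1 := by
    simp [φ, quarticDual_X_sq_mul_X_sq, quarticDual_X_sq_mul_X_sq_of_ne]
  intro hmem
  refine one_ne_zero (hφ ▸ map_eq_zero_of_mem_ideal_span φ ?_ (hI ▸ hmem))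
  rintro p ((⟨i, rfl⟩ | ⟨j, hj, -, rfl⟩) | ⟨K, hK, rfl⟩) q <;>
    simp only [φ, LinearMap.sub_apply, sub_eq_zero]
  · simp only [quarticDual_mul_X_pow_eq_zero _ _ _ _ (by norm_num : 4 < 5)]
  · exact quarticDual_mul_sum_X_pow_eq (by decide) (by decide) q hj
  · simp only [quarticDual_mul_prod_X_eq_zero _ _ _ (hK ▸ by norm_num : 2 < K.card)]
end
end

section
/- Let $n\geq 3$ and consider the quotient ring $R=\mathbb{C}[y_1,y_2,y_3]/(y_1^2+y_2^2+y_3^2,\ y_1 y_2 y_3,\ y_1^3,\ y_2^3,\ y_3^3)$ (the case $n=3$, $a=1$, $k=1$, $b_1=2$). Then $\dim_\mathbb{C} R = 12$, and the successive quotients of the filtration $F_r=(y_3^r)R$ for $r=0,1,2$ have dimensions $5$, $4$, and $3$ respectively. -/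
/-!
Write `x, y, z` for the images of the variables. The relation `x² = -y² - z²` lowers the
`x`-degree of a monomial without lowering its `z`-degree, and once the `x`-degree is at most one,
`xyz = 0`, the cubes, `xy² = -xz²` and `y²z² = 0` reduce every monomial to a standard one. So the
twelve standard monomials span, and those of `z`-degree `≥ r` span `z^r R`. They are independent
because twelve coefficient functionals on `ℂ[x,y,z]`, dual to them, vanish on the ideal. Hence
`z^r R / z^(r+1) R` has the standard monomials of `z`-degree exactly `r` as a basis: `5, 4, 3`.
-/

open MvPolynomial

noncomputable section

theorem Ideal.map_eq_zero_of_mem_span {R M : Type*} [CommSemiring R] [AddCommMonoid M]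
    (φ : R →+ M) {s : Set R} (h : ∀ c, ∀ g ∈ s, φ (c * g) = 0) {q : R}
    (hq : q ∈ Ideal.span s) : φ q = 0 := by
  suffices ∀ c, φ (c * q) = 0 by simpa using this 1
  induction hq using Submodule.span_induction with
  | mem g hg => exact fun c => h c g hg
  | zero => simp
  | add p q _ _ hp hq => simp [mul_add, hp, hq]
  | smul a p _ hp => simpa [smul_eq_mul, ← mul_assoc] using fun c => hp (c * a)

theorem Submodule.finrank_quotient_comap_subtype {K V : Type*} [DivisionRing K] [AddCommGroup V]
    [Module K V] {M N : Submodule K V} [Module.Finite K M] (h : N ≤ M) :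
    Module.finrank K (M ⧸ N.comap M.subtype) = Module.finrank K M - Module.finrank K N := by
  rw [Submodule.finrank_quotient, (Submodule.comapSubtypeEquivOfLe h).finrank_eq]

def orbitIdeal : Ideal (MvPolynomial (Fin 3) ℂ) :=
  Ideal.span {X 0 ^ 2 + X 1 ^ 2 + X 2 ^ 2, X 0 * X 1 * X 2, X 0 ^ 3, X 1 ^ 3, X 2 ^ 3}

abbrev OrbitRing : Type := MvPolynomial (Fin 3) ℂ ⧸ orbitIdeal

namespace OrbitRing

def gen (i : Fin 3) : OrbitRing := Ideal.Quotient.mk orbitIdeal (X i)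

def mon (m : ℕ × ℕ × ℕ) : OrbitRing := gen 0 ^ m.1 * gen 1 ^ m.2.1 * gen 2 ^ m.2.2

lemma mk_eq_zero_of_mem_generators {p : MvPolynomial (Fin 3) ℂ}
    (hp : p ∈ ({X 0 ^ 2 + X 1 ^ 2 + X 2 ^ 2, X 0 * X 1 * X 2, X 0 ^ 3, X 1 ^ 3, X 2 ^ 3} :
      Set (MvPolynomial (Fin 3) ℂ))) :
    Ideal.Quotient.mk orbitIdeal p = 0 :=
  Ideal.Quotient.eq_zero_iff_mem.mpr (Ideal.subset_span hp)

lemma gen_sq_add_gen_sq_add_gen_sq : gen 0 ^ 2 + gen 1 ^ 2 + gen 2 ^ 2 = 0 := by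
  simp only [gen, ← map_pow, ← map_add]
  exact mk_eq_zero_of_mem_generators (by simp)

lemma gen_mul_gen_mul_gen : gen 0 * gen 1 * gen 2 = 0 := by
  simp only [gen, ← map_mul]
  exact mk_eq_zero_of_mem_generators (by simp)

lemma gen_pow_three (i : Fin 3) : gen i ^ 3 = 0 := by
  rw [gen, ← map_pow]
  exact mk_eq_zero_of_mem_generators (by fin_cases i <;> simp)

lemma gen_zero_mul_gen_one_sq : gen 0 * gen 1 ^ 2 = -(gen 0 * gen 2 ^ 2) := by
  linear_combination gen 0 * gen_sq_add_gen_sq_add_gen_sq - gen_pow_three 0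

lemma gen_one_sq_mul_gen_two_sq : gen 1 ^ 2 * gen 2 ^ 2 = 0 := by
  have h : (2 : ℂ) • (gen 1 ^ 2 * gen 2 ^ 2) = 0 := by
    rw [two_smul]
    linear_combination (gen 1 ^ 2 + gen 2 ^ 2 - gen 0 ^ 2) * gen_sq_add_gen_sq_add_gen_sq +
      gen 0 * gen_pow_three 0 - gen 1 * gen_pow_three 1 - gen 2 * gen_pow_three 2
  exact (smul_eq_zero.mp h).resolve_left two_ne_zero

lemma mon_eq_zero {a b c : ℕ}
    (h : 3 ≤ a ∨ 3 ≤ b ∨ 3 ≤ c ∨ (1 ≤ a ∧ 1 ≤ b ∧ 1 ≤ c) ∨ (2 ≤ b ∧ 2 ≤ c)) :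
    mon (a, b, c) = 0 := by
  unfold mon
  rcases h with h | h | h | ⟨ha, hb, hc⟩ | ⟨hb, hc⟩
  · obtain ⟨a, rfl⟩ := Nat.exists_eq_add_of_le' h
    linear_combination (gen 0 ^ a * gen 1 ^ b * gen 2 ^ c) * gen_pow_three 0
  · obtain ⟨b, rfl⟩ := Nat.exists_eq_add_of_le' h
    linear_combination (gen 0 ^ a * gen 1 ^ b * gen 2 ^ c) * gen_pow_three 1
  · obtain ⟨c, rfl⟩ := Nat.exists_eq_add_of_le' h
    linear_combination (gen 0 ^ a * gen 1 ^ b * gen 2 ^ c) * gen_pow_three 2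
  · obtain ⟨a, rfl⟩ := Nat.exists_eq_add_of_le' ha
    obtain ⟨b, rfl⟩ := Nat.exists_eq_add_of_le' hb
    obtain ⟨c, rfl⟩ := Nat.exists_eq_add_of_le' hc
    linear_combination (gen 0 ^ a * gen 1 ^ b * gen 2 ^ c) * gen_mul_gen_mul_gen
  · obtain ⟨b, rfl⟩ := Nat.exists_eq_add_of_le' hb
    obtain ⟨c, rfl⟩ := Nat.exists_eq_add_of_le' hc
    linear_combination (gen 0 ^ a * gen 1 ^ b * gen 2 ^ c) * gen_one_sq_mul_gen_two_sq

/-- The monomials outside the lex (`x > y > z`) initial ideal `(x², xy², xyz, y³, z³, y²z²)`. -/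
def standardExponents : Finset (ℕ × ℕ × ℕ) :=
  {(0, 0, 0), (1, 0, 0), (0, 1, 0), (0, 0, 1), (1, 1, 0), (1, 0, 1), (0, 1, 1), (0, 2, 0),
    (0, 0, 2), (1, 0, 2), (0, 1, 2), (0, 2, 1)}

def standardSpan (r : ℕ) : Submodule ℂ OrbitRing :=
  Submodule.span ℂ (mon '' ↑{m ∈ standardExponents | r ≤ m.2.2})

lemma mon_mem_standardSpan_of_mem {m : ℕ × ℕ × ℕ} {r : ℕ} (hm : m ∈ standardExponents)
    (hr : r ≤ m.2.2) : mon m ∈ standardSpan r :=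
  Submodule.subset_span ⟨m, by simp [hm, hr], rfl⟩

lemma standardSpan_anti : Antitone standardSpan := fun _ _ hrs =>
  Submodule.span_mono <| Set.image_mono fun m hm => by
    simp only [Finset.coe_filter, Set.mem_ofPred_eq] at hm ⊢
    exact ⟨hm.1, hrs.trans hm.2⟩

lemma mon_add_two (a b c : ℕ) : mon (a + 2, b, c) = -mon (a, b + 2, c) - mon (a, b, c + 2) := by
  unfold mon
  linear_combination (gen 0 ^ a * gen 1 ^ b * gen 2 ^ c) * gen_sq_add_gen_sq_add_gen_sq

lemma mon_mem_standardSpan_of_le_one {a b c : ℕ} (ha : a ≤ 1) : mon (a, b, c) ∈ standardSpan c := by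
  by_cases hzero : 3 ≤ a ∨ 3 ≤ b ∨ 3 ≤ c ∨ (1 ≤ a ∧ 1 ≤ b ∧ 1 ≤ c) ∨ (2 ≤ b ∧ 2 ≤ c)
  · rw [mon_eq_zero hzero]
    exact zero_mem _
  by_cases h120 : a = 1 ∧ b = 2 ∧ c = 0
  · obtain ⟨rfl, rfl, rfl⟩ := h120
    have : mon (1, 2, 0) = -mon (1, 0, 2) := by
      simpa [mon] using gen_zero_mul_gen_one_sq
    rw [this]
    exact neg_mem
      (standardSpan_anti (Nat.zero_le 2) (mon_mem_standardSpan_of_mem (by decide) le_rfl))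
  refine mon_mem_standardSpan_of_mem ?_ le_rfl
  have hb : b < 3 := by omega
  have hc : c < 3 := by omega
  interval_cases a <;> interval_cases b <;> interval_cases c <;> simp_all [standardExponents]

theorem mon_mem_standardSpan : ∀ a b c : ℕ, mon (a, b, c) ∈ standardSpan c
  | a + 2, b, c => by
    rw [mon_add_two]
    exact sub_mem (neg_mem (mon_mem_standardSpan a (b + 2) c))
      (standardSpan_anti (Nat.le_add_right c 2) (mon_mem_standardSpan a b (c + 2)))
  | 0, _, _ => mon_mem_standardSpan_of_le_one zero_le_one
  | 1, _, _ => mon_mem_standardSpan_of_le_one le_rfl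

lemma mk_monomial (s : Fin 3 →₀ ℕ) (a : ℂ) :
    Ideal.Quotient.mk orbitIdeal (monomial s a) = a • mon (s 0, s 1, s 2) := by
  rw [monomial_eq, C_mul', ← Ideal.Quotient.mkₐ_eq_mk ℂ, map_smul,
    Finsupp.prod_fintype _ _ (fun _ => pow_zero _), Fin.prod_univ_three]
  simp [mon, gen]

lemma mon_mul_gen_two_pow (a b c r : ℕ) : mon (a, b, c) * gen 2 ^ r = mon (a, b, c + r) := by
  simp only [mon, pow_add, mul_assoc]

theorem restrictScalars_span_gen_two_pow (r : ℕ) :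
    (Ideal.span {gen 2 ^ r}).restrictScalars ℂ = standardSpan r := by
  apply le_antisymm
  · intro u hu
    obtain ⟨p, rfl⟩ := Ideal.mem_span_singleton'.mp hu
    obtain ⟨q, rfl⟩ := Ideal.Quotient.mk_surjective p
    clear hu
    induction q using MvPolynomial.induction_on' with
    | monomial s a =>
      rw [mk_monomial, smul_mul_assoc, mon_mul_gen_two_pow]
      exact Submodule.smul_mem _ a
        (standardSpan_anti (Nat.le_add_left r _) (mon_mem_standardSpan _ _ _))
    | add p q hp hq =>
      rw [map_add, add_mul]
      exact add_mem hp hq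
  · rw [standardSpan, Submodule.span_le]
    rintro _ ⟨⟨a, b, c⟩, hm, rfl⟩
    obtain ⟨c, rfl⟩ := Nat.exists_eq_add_of_le' (Finset.mem_filter.mp hm).2
    exact Ideal.mem_span_singleton'.mpr ⟨mon (a, b, c), mon_mul_gen_two_pow a b c r⟩

def exponent (m : ℕ × ℕ × ℕ) : Fin 3 →₀ ℕ :=
  Finsupp.single 0 m.1 + Finsupp.single 1 m.2.1 + Finsupp.single 2 m.2.2

@[simp] lemma exponent_apply_zero (m : ℕ × ℕ × ℕ) : exponent m 0 = m.1 := by simp [exponent]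
@[simp] lemma exponent_apply_one (m : ℕ × ℕ × ℕ) : exponent m 1 = m.2.1 := by simp [exponent]
@[simp] lemma exponent_apply_two (m : ℕ × ℕ × ℕ) : exponent m 2 = m.2.2 := by simp [exponent]

@[simp] lemma exponent_inj {m m' : ℕ × ℕ × ℕ} : exponent m = exponent m' ↔ m = m' := by
  refine ⟨fun h => ?_, congrArg exponent⟩
  have h0 := DFunLike.congr_fun h 0
  have h1 := DFunLike.congr_fun h 1
  have h2 := DFunLike.congr_fun h 2
  simp only [exponent_apply_zero, exponent_apply_one, exponent_apply_two] at h0 h1 h2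
  exact Prod.ext h0 (Prod.ext h1 h2)

@[simp] lemma exponent_le_exponent {m m' : ℕ × ℕ × ℕ} : exponent m ≤ exponent m' ↔ m ≤ m' := by
  simp [Finsupp.le_def, Fin.forall_fin_succ, Prod.le_def]

@[simp] lemma exponent_sub (m m' : ℕ × ℕ × ℕ) : exponent m - exponent m' = exponent (m - m') := by
  ext i; fin_cases i <;> simp

lemma mk_monomial_exponent (m : ℕ × ℕ × ℕ) :
    Ideal.Quotient.mk orbitIdeal (monomial (exponent m) 1) = mon m := by
  simp [mk_monomial]

lemma monomial_exponent (a b c : ℕ) :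
    monomial (exponent (a, b, c)) (1 : ℂ) = X 0 ^ a * X 1 ^ b * X 2 ^ c := by
  simp [exponent, X_pow_eq_monomial, monomial_mul]

/-- Each subtracted coefficient belongs to the monomial that multiples of `x² + y² + z²` tie to
the standard one; this is what makes the functional vanish on `orbitIdeal`. -/
def dual : ℕ × ℕ × ℕ → MvPolynomial (Fin 3) ℂ →ₗ[ℂ] ℂ
  | (0, 2, 0) => lcoeff ℂ (exponent (0, 2, 0)) - lcoeff ℂ (exponent (2, 0, 0))
  | (0, 0, 2) => lcoeff ℂ (exponent (0, 0, 2)) - lcoeff ℂ (exponent (2, 0, 0))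
  | (1, 0, 2) => lcoeff ℂ (exponent (1, 0, 2)) - lcoeff ℂ (exponent (1, 2, 0))
  | (0, 1, 2) => lcoeff ℂ (exponent (0, 1, 2)) - lcoeff ℂ (exponent (2, 1, 0))
  | (0, 2, 1) => lcoeff ℂ (exponent (0, 2, 1)) - lcoeff ℂ (exponent (2, 0, 1))
  | m => lcoeff ℂ (exponent m)

lemma dual_eq_zero_of_mem {m : ℕ × ℕ × ℕ} (hm : m ∈ standardExponents)
    {q : MvPolynomial (Fin 3) ℂ} (hq : q ∈ orbitIdeal) : dual m q = 0 := by
  have hgens : orbitIdeal = Ideal.span {monomial (exponent (2, 0, 0)) 1 +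
      monomial (exponent (0, 2, 0)) 1 + monomial (exponent (0, 0, 2)) 1,
      monomial (exponent (1, 1, 1)) 1, monomial (exponent (3, 0, 0)) 1,
      monomial (exponent (0, 3, 0)) 1, monomial (exponent (0, 0, 3)) 1} := by
    simp [orbitIdeal, monomial_exponent]
  rw [hgens] at hq
  refine Ideal.map_eq_zero_of_mem_span (dual m).toAddMonoidHom (fun c g hg => ?_) hq
  simp only [Set.mem_insert_iff, Set.mem_singleton_iff] at hg
  rcases hg with rfl | rfl | rfl | rfl | rfl
  all_goals
    simp only [standardExponents, Finset.mem_insert, Finset.mem_singleton] at hm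
    rcases hm with rfl | rfl | rfl | rfl | rfl | rfl | rfl | rfl | rfl | rfl | rfl | rfl
  all_goals simp [dual, mul_add, coeff_mul_monomial']

lemma dual_monomial_exponent {m m' : ℕ × ℕ × ℕ} (hm : m ∈ standardExponents)
    (hm' : m' ∈ standardExponents) :
    dual m (monomial (exponent m') 1) = if m' = m then 1 else 0 := by
  simp only [standardExponents, Finset.mem_insert, Finset.mem_singleton] at hm hm'
  rcases hm with rfl | rfl | rfl | rfl | rfl | rfl | rfl | rfl | rfl | rfl | rfl | rfl <;>
  rcases hm' with rfl | rfl | rfl | rfl | rfl | rfl | rfl | rfl | rfl | rfl | rfl | rfl <;>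
  simp [dual, coeff_monomial]

theorem linearIndepOn_mon : LinearIndepOn ℂ mon (standardExponents : Set (ℕ × ℕ × ℕ)) := by
  refine linearIndepOn_finset_iff.mpr fun f hf m hm => ?_
  have hmem : ∑ m' ∈ standardExponents, f m' • monomial (exponent m') (1 : ℂ) ∈ orbitIdeal := by
    rw [← Ideal.Quotient.eq_zero_iff_mem, ← Ideal.Quotient.mkₐ_eq_mk ℂ, map_sum]
    simpa [mk_monomial_exponent] using hf
  have := dual_eq_zero_of_mem hm hmem
  rwa [map_sum, Finset.sum_eq_single_of_mem m hm fun m' hm' hne => by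
      rw [map_smul, dual_monomial_exponent hm hm', if_neg hne, smul_zero],
    map_smul, dual_monomial_exponent hm hm, if_pos rfl, smul_eq_mul, mul_one] at this

lemma finrank_standardSpan (r : ℕ) :
    Module.finrank ℂ (standardSpan r) = {m ∈ standardExponents | r ≤ m.2.2}.card := by
  have hli : LinearIndepOn ℂ mon ↑{m ∈ standardExponents | r ≤ m.2.2} :=
    linearIndepOn_mon.mono (Finset.coe_subset.mpr (Finset.filter_subset _ _))
  rw [standardSpan, Set.image_eq_range, finrank_span_eq_card hli]
  simp

lemma standardSpan_zero : standardSpan 0 = ⊤ := by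
  rw [← restrictScalars_span_gen_two_pow, pow_zero, Ideal.span_singleton_one,
    Submodule.restrictScalars_top]

instance : Module.Finite ℂ OrbitRing :=
  ⟨standardSpan_zero ▸ Submodule.fg_span ((Finset.finite_toSet _).image mon)⟩

lemma finrank_eq_twelve : Module.finrank ℂ OrbitRing = 12 := by
  rw [← finrank_top ℂ OrbitRing, ← standardSpan_zero, finrank_standardSpan]
  rfl

lemma finrank_quotient_standardSpan_succ (r : ℕ) :
    Module.finrank ℂ (standardSpan r ⧸ (standardSpan (r + 1)).comap (standardSpan r).subtype) =
      {m ∈ standardExponents | m.2.2 = r}.card := by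
  rw [Submodule.finrank_quotient_comap_subtype (standardSpan_anti r.le_succ), finrank_standardSpan,
    finrank_standardSpan]
  have hsplit : {m ∈ standardExponents | r ≤ m.2.2} =
      {m ∈ standardExponents | m.2.2 = r} ∪ {m ∈ standardExponents | r + 1 ≤ m.2.2} := by
    rw [← Finset.filter_or]
    exact Finset.filter_congr fun m _ => by omega
  rw [hsplit, Finset.card_union_of_disjoint (Finset.disjoint_filter.mpr fun _ _ h => by omega),
    Nat.add_sub_cancel]

end OrbitRing

open OrbitRing in
/-- for `R = ℂ[y₁,y₂,y₃]/(y₁²+y₂²+y₃², y₁y₂y₃, y₁³, y₂³, y₃³)` we have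
`dim_ℂ R = 12`, and the successive quotients of the filtration `F_r = (y₃^r)R` for
`r = 0, 1, 2` have dimensions `5`, `4`, `3` respectively. -/
theorem stmt19 (I : Ideal (MvPolynomial (Fin 3) ℂ))
    (hI : I = Ideal.span {X 0 ^ 2 + X 1 ^ 2 + X 2 ^ 2, X 0 * X 1 * X 2,
        X 0 ^ 3, X 1 ^ 3, (X 2 : MvPolynomial (Fin 3) ℂ) ^ 3})
    (F : ℕ → Ideal (MvPolynomial (Fin 3) ℂ ⧸ I))
    (hF : F = fun r => Ideal.span {(Ideal.Quotient.mk I (X 2)) ^ r})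
    (quotDim : ℕ → ℕ)
    (hquotDim : ∀ r : ℕ, quotDim r = Module.finrank ℂ
      (↥((F r).restrictScalars ℂ) ⧸
        Submodule.comap ((F r).restrictScalars ℂ).subtype ((F (r + 1)).restrictScalars ℂ))) :
    Module.finrank ℂ (MvPolynomial (Fin 3) ℂ ⧸ I) = 12 ∧
      quotDim 0 = 5 ∧ quotDim 1 = 4 ∧ quotDim 2 = 3 := by
  obtain rfl : I = orbitIdeal := hI
  subst hF
  have hquot (r : ℕ) : quotDim r = {m ∈ standardExponents | m.2.2 = r}.card := by
    rw [hquotDim, ← gen, restrictScalars_span_gen_two_pow, restrictScalars_span_gen_two_pow,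
      finrank_quotient_standardSpan_succ]
  exact ⟨finrank_eq_twelve, hquot 0, hquot 1, hquot 2⟩
end
end
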